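/- arXiv:1910.08911 — 4 statements merged into one kernel-verified Lean document; each statement's English description precedes it below -/
import Mathlib

section
/- (Lorentz refinement of the Sobolev inequality.) Let n ≥ 3. There is a constant C > 0, depending only on n, such that for every u ∈ C_c^∞(ℝⁿ), ‖u‖_{L^{2n/(n-2),2}(ℝⁿ)} ≤ C ‖∇u‖_{L²(ℝⁿ)}. -/
open MeasureTheory ENNReal Set

/-- The distribution function `d_f(s) = μ({x : |f(x)| > s})`. -/
noncomputable def distFun {α : Type*} [MeasurableSpace α] (μ : Measure α)
    (f : α → ℝ) (s : ℝ) : ℝ≥0∞ :=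
  μ {x | s < |f x|}

/-- The weak `L^p` quasinorm `‖f‖_{L^{p,∞}} = sup_{s>0} s · d_f(s)^{1/p}` (for `0 < p < ∞`). -/
noncomputable def weakNorm {α : Type*} [MeasurableSpace α] (μ : Measure α)
    (f : α → ℝ) (p : ℝ) : ℝ≥0∞ :=
  ⨆ s : Ioi (0:ℝ), ENNReal.ofReal s.1 * distFun μ f s.1 ^ (1/p)

/-- The Lorentz quasinorm
`‖f‖_{L^{p,q}} = p^{1/q} (∫₀^∞ (s · d_f(s)^{1/p})^q ds/s)^{1/q}` for `q < ∞`, and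
`‖f‖_{L^{p,∞}} = sup_{s>0} s · d_f(s)^{1/p}` for `q = ∞`. -/
noncomputable def lorentzNorm {α : Type*} [MeasurableSpace α] (μ : Measure α)
    (f : α → ℝ) (p : ℝ) (q : ℝ≥0∞) : ℝ≥0∞ :=
  if q = ∞ then weakNorm μ f p
  else ENNReal.ofReal p ^ (1/q.toReal) *
    (∫⁻ s in Ioi (0:ℝ),
      (ENNReal.ofReal s * distFun μ f s ^ (1/p)) ^ q.toReal / ENNReal.ofReal s) ^ (1/q.toReal)

/-- The weak norm with `ℝ≥0∞`-valued index, with the convention `‖f‖_{L^{∞,∞}} = ‖f‖_{L^∞}`. -/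
noncomputable def weakNormE {α : Type*} [MeasurableSpace α] (μ : Measure α)
    (f : α → ℝ) (p : ℝ≥0∞) : ℝ≥0∞ :=
  if p = ∞ then eLpNorm f ∞ μ else weakNorm μ f p.toReal

/-- A smooth odd-ish cutoff: `0` on `[-1,1]`-ish, `±1` outside `[-2,2]`. -/
noncomputable def phiCut (t : ℝ) : ℝ :=
  Real.smoothTransition (3 * t - 4) - Real.smoothTransition (-(3 * t) - 4)

theorem phiCut_contDiff : ContDiff ℝ ((⊤:ℕ∞) : WithTop ℕ∞) phiCut := by
  have h1 : ContDiff ℝ (⊤:ℕ∞) fun t : ℝ => 3*t-4 := by fun_prop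
  have h2 : ContDiff ℝ (⊤:ℕ∞) fun t : ℝ => -(3*t)-4 := by fun_prop
  exact (Real.smoothTransition.contDiff.comp h1).sub
    (Real.smoothTransition.contDiff.comp h2)

theorem phiCut_eq_zero {t : ℝ} (h : |t| < 4/3) : phiCut t = 0 := by
  rw [abs_lt] at h
  rw [phiCut, Real.smoothTransition.zero_of_nonpos (by linarith),
    Real.smoothTransition.zero_of_nonpos (by linarith), sub_zero]

theorem phiCut_eq_one {t : ℝ} (h : 5/3 < t) : phiCut t = 1 := by
  rw [phiCut, Real.smoothTransition.one_of_one_le (by linarith),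
    Real.smoothTransition.zero_of_nonpos (by linarith), sub_zero]

theorem phiCut_eq_neg_one {t : ℝ} (h : t < -(5/3)) : phiCut t = -1 := by
  rw [phiCut, Real.smoothTransition.zero_of_nonpos (by linarith),
    Real.smoothTransition.one_of_one_le (by linarith), zero_sub]

theorem abs_phiCut_eq_one {t : ℝ} (h : 2 ≤ |t|) : |phiCut t| = 1 := by
  rcases le_abs.mp h with h | h
  · rw [phiCut_eq_one (by linarith), abs_one]
  · rw [phiCut_eq_neg_one (by linarith), abs_neg, abs_one]

theorem deriv_phiCut_eq_zero {t : ℝ} (h : |t| ≤ 1 ∨ 2 ≤ |t|) : deriv phiCut t = 0 := by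
  have : ∃ c : ℝ, phiCut =ᶠ[nhds t] fun _ => c := by
    rcases h with h | h
    · refine ⟨0, ?_⟩
      filter_upwards [Metric.ball_mem_nhds t (by norm_num : (0:ℝ) < 1/4)] with s hs
      rw [Metric.mem_ball, Real.dist_eq] at hs
      have ht := abs_le.mp h
      have hst := abs_lt.mp hs
      exact phiCut_eq_zero (by rw [abs_lt]; constructor <;> linarith)
    · rcases le_abs.mp h with h2 | h2
      · refine ⟨1, ?_⟩
        filter_upwards [Metric.ball_mem_nhds t (by norm_num : (0:ℝ) < 1/4)] with s hs
        rw [Metric.mem_ball, Real.dist_eq, abs_lt] at hs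
        exact phiCut_eq_one (by linarith)
      · refine ⟨-1, ?_⟩
        filter_upwards [Metric.ball_mem_nhds t (by norm_num : (0:ℝ) < 1/4)] with s hs
        rw [Metric.mem_ball, Real.dist_eq, abs_lt] at hs
        exact phiCut_eq_neg_one (by linarith)
  obtain ⟨c, hc⟩ := this
  rw [hc.deriv_eq, deriv_const]

theorem phiCut_deriv_bound : ∃ M : ℝ, 0 < M ∧ ∀ t, |deriv phiCut t| ≤ M := by
  have hcont : Continuous (deriv phiCut) :=
    phiCut_contDiff.continuous_deriv (by exact_mod_cast le_top)
  have hsupp : HasCompactSupport (deriv phiCut) := by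
    apply HasCompactSupport.intro (isCompact_Icc (a := (-2:ℝ)) (b := 2))
    intro x hx
    rw [mem_Icc, not_and_or, not_le, not_le] at hx
    apply deriv_phiCut_eq_zero
    right
    rcases hx with h | h
    · rw [abs_of_nonpos (by linarith)]; linarith
    · rw [abs_of_nonneg (by linarith)]; linarith
  obtain ⟨C, hC⟩ := hsupp.exists_bound_of_continuous hcont
  exact ⟨|C| + 1, by positivity, fun t => ((Real.norm_eq_abs _ ▸ hC t).trans ((le_abs_self C).trans (by linarith)))⟩


/-- Lorentz refinement of the Sobolev inequality: for `n ≥ 3` and `u ∈ C_c^∞(ℝⁿ)`,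
`‖u‖_{L^{2n/(n-2),2}(ℝⁿ)} ≤ C ‖∇u‖_{L²(ℝⁿ)}`. -/
theorem sobolev_lorentz
    (n : ℕ) (hn : 3 ≤ n) :
    ∃ C : ℝ, 0 < C ∧ ∀ u : EuclideanSpace ℝ (Fin n) → ℝ,
      ContDiff ℝ (⊤ : ℕ∞) u → HasCompactSupport u →
      lorentzNorm volume u (2 * (n:ℝ) / ((n:ℝ) - 2)) 2
        ≤ ENNReal.ofReal C * eLpNorm (fun x => ‖gradient u x‖) 2 volume := by
  classical
  obtain ⟨M, hM0, hM⟩ : ∃ M : ℝ, 0 < M ∧ ∀ t : ℝ, |deriv phiCut t| ≤ M := phiCut_deriv_bound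
  have hn2 : (2:ℝ) < (n:ℝ) := by exact_mod_cast (by omega : 2 < n)
  set p : ℝ := 2 * (n:ℝ) / ((n:ℝ) - 2) with hpdef
  have hppos : 0 < p := by
    apply div_pos (by linarith) (by linarith)
  set K : NNReal :=
    SNormLESNormFDerivOfEqConst ℝ (volume : Measure (EuclideanSpace ℝ (Fin n)))
      ((2:NNReal) : ℝ) with hKdef
  set Kc : ℝ≥0∞ := (K : ℝ≥0∞) * ENNReal.ofReal M with hKcdef
  have hKcne : Kc ≠ ∞ := ENNReal.mul_ne_top ENNReal.coe_ne_top ENNReal.ofReal_ne_top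
  set Cc : ℝ≥0∞ := ENNReal.ofReal p ^ ((1:ℝ)/2) * (8:ℝ≥0∞) ^ ((1:ℝ)/2) * Kc with hCcdef
  have hCcne : Cc ≠ ∞ := by
    apply ENNReal.mul_ne_top
    apply ENNReal.mul_ne_top
    · exact ENNReal.rpow_ne_top_of_nonneg (by norm_num) ENNReal.ofReal_ne_top
    · exact ENNReal.rpow_ne_top_of_nonneg (by norm_num) (by norm_num)
    · exact hKcne
  refine ⟨Cc.toReal + 1, by positivity, ?_⟩
  intro u hu hsupp
  have hu1 : ContDiff ℝ 1 u := hu.of_le (by simp)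
  have hucont : Continuous u := hu1.continuous
  -- notation
  set c : ℤ → ℝ := fun j => (2:ℝ) ^ j with hcdef
  have hcpos : ∀ j, 0 < c j := fun j => zpow_pos two_pos j
  have hcmono : ∀ i j : ℤ, i ≤ j → c i ≤ c j := fun i j h =>
    zpow_le_zpow_right₀ one_le_two h
  have hcsucc : ∀ j : ℤ, c (j + 1) = 2 * c j := by
    intro j
    show (2:ℝ) ^ (j+1) = 2 * (2:ℝ) ^ j
    rw [zpow_add_one₀ (two_ne_zero : (2:ℝ) ≠ 0)]
    ring
  set Ej : ℤ → Set (EuclideanSpace ℝ (Fin n)) :=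
    fun j => {x | c j < |u x| ∧ |u x| < c (j + 1)} with hEjdef
  have hEjmeas : ∀ j, MeasurableSet (Ej j) := by
    intro j
    have : Ej j = (fun x => |u x|) ⁻¹' Ioo (c j) (c (j+1)) := rfl
    rw [this]
    exact ((isOpen_Ioo).preimage (hucont.abs)).measurableSet
  have hEjdisj : Pairwise (Function.onFun Disjoint Ej) := by
    intro i j hij
    wlog hlt : i < j generalizing i j
    · exact (this hij.symm (by omega : j < i)).symm
    refine Set.disjoint_left.mpr ?_
    rintro x ⟨hi1, hi2⟩ ⟨hj1, hj2⟩
    have : c (i+1) ≤ c j := hcmono _ _ (by omega)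
    linarith
  set I : ℤ → ℝ≥0∞ := fun j => ∫⁻ x in Ej j, (‖fderiv ℝ u x‖₊ : ℝ≥0∞) ^ (2:ℝ) with hIdef
  set Itot : ℝ≥0∞ := ∫⁻ x, (‖fderiv ℝ u x‖₊ : ℝ≥0∞) ^ (2:ℝ) with hItotdef
  have hsumI : ∑' j : ℤ, I j ≤ Itot := by
    rw [hIdef]
    rw [← lintegral_iUnion hEjmeas hEjdisj]
    exact setLIntegral_le_lintegral _ _
  -- key truncation estimate
  have key : ∀ j : ℤ, ENNReal.ofReal (c j) * distFun volume u (c (j+1)) ^ (1/p)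
      ≤ Kc * (I j) ^ ((1:ℝ)/2) := by
    intro j
    have hcj : 0 < c j := hcpos j
    set g : ℝ → ℝ := fun t => c j * phiCut (t / c j) with hgdef
    set v : EuclideanSpace ℝ (Fin n) → ℝ := g ∘ u with hvdef
    have hg0 : g 0 = 0 := by
      rw [hgdef]
      simp only [zero_div]
      rw [phiCut_eq_zero (by norm_num : |(0:ℝ)| < 4/3), mul_zero]
    have hvsupp : HasCompactSupport v := hsupp.comp_left hg0
    have hphi1 : ContDiff ℝ 1 phiCut :=
      phiCut_contDiff.of_le (by exact_mod_cast (le_top : (1:ℕ∞) ≤ ⊤))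
    have hgcd : ContDiff ℝ 1 g :=
      contDiff_const.mul (hphi1.comp (contDiff_id.div_const _))
    have hvcd : ContDiff ℝ 1 v := hgcd.comp hu1
    have hgderiv : ∀ t : ℝ, HasDerivAt g (deriv phiCut (t / c j)) t := by
      intro t
      have h1 : HasDerivAt (fun s : ℝ => s / c j) (1 / c j) t := by
        simpa using (hasDerivAt_id t).div_const (c j)
      have h2 : HasDerivAt phiCut (deriv phiCut (t / c j)) (t / c j) :=
        ((hphi1.differentiable one_ne_zero) (t / c j)).hasDerivAt
      have h3 : HasDerivAt g (c j * (deriv phiCut (t / c j) * (1 / c j))) t := by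
        exact (h2.comp t h1).const_mul (c j)
      convert h3 using 1
      field_simp
    have hvfd : ∀ x, HasFDerivAt v ((deriv phiCut (u x / c j)) • fderiv ℝ u x) x := by
      intro x
      exact (hgderiv (u x)).comp_hasFDerivAt x ((hu1.differentiable one_ne_zero) x).hasFDerivAt
    have hvnorm : ∀ x, ‖fderiv ℝ v x‖ = |deriv phiCut (u x / c j)| * ‖fderiv ℝ u x‖ := by
      intro x
      rw [(hvfd x).fderiv, norm_smul, Real.norm_eq_abs]
    have hvan : ∀ x, x ∉ Ej j → deriv phiCut (u x / c j) = 0 := by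
      intro x hx
      apply deriv_phiCut_eq_zero
      rw [abs_div, abs_of_pos hcj]
      rcases not_and_or.mp hx with h | h
      · left
        rw [div_le_one hcj]
        exact not_lt.mp h
      · right
        rw [le_div_iff₀ hcj]
        have := not_lt.mp h
        rw [hcsucc j] at this
        linarith
    have hpt : ∀ x, (‖fderiv ℝ v x‖₊ : ℝ≥0∞) ^ (2:ℝ)
        ≤ (ENNReal.ofReal M) ^ (2:ℝ) *
          (Ej j).indicator (fun x => (‖fderiv ℝ u x‖₊ : ℝ≥0∞) ^ (2:ℝ)) x := by
      intro x
      by_cases hx : x ∈ Ej j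
      · rw [indicator_of_mem hx]
        rw [← ENNReal.mul_rpow_of_nonneg _ _ (by norm_num : (0:ℝ) ≤ 2)]
        apply ENNReal.rpow_le_rpow _ (by norm_num : (0:ℝ) ≤ 2)
        rw [← enorm_eq_nnnorm, ← enorm_eq_nnnorm, ← ofReal_norm, ← ofReal_norm,
          ← ENNReal.ofReal_mul hM0.le]
        apply ENNReal.ofReal_le_ofReal
        rw [hvnorm x]
        exact mul_le_mul_of_nonneg_right (hM _) (norm_nonneg _)
      · rw [indicator_of_notMem hx]
        have h0 : fderiv ℝ v x = 0 := by
          rw [(hvfd x).fderiv, hvan x hx, zero_smul]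
        rw [h0, mul_zero]
        simp [ENNReal.zero_rpow_of_pos (by norm_num : (0:ℝ) < 2)]
    have hvint : (∫⁻ x, (‖fderiv ℝ v x‖₊ : ℝ≥0∞) ^ (2:ℝ)) ≤ (ENNReal.ofReal M) ^ (2:ℝ) * I j := by
      calc (∫⁻ x, (‖fderiv ℝ v x‖₊ : ℝ≥0∞) ^ (2:ℝ))
          ≤ ∫⁻ x, (ENNReal.ofReal M) ^ (2:ℝ) *
            (Ej j).indicator (fun x => (‖fderiv ℝ u x‖₊ : ℝ≥0∞) ^ (2:ℝ)) x :=
            lintegral_mono hpt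
        _ = (ENNReal.ofReal M) ^ (2:ℝ) *
            ∫⁻ x, (Ej j).indicator (fun x => (‖fderiv ℝ u x‖₊ : ℝ≥0∞) ^ (2:ℝ)) x :=
            lintegral_const_mul' _ _
              (ENNReal.rpow_ne_top_of_nonneg (by norm_num) ENNReal.ofReal_ne_top)
        _ = (ENNReal.ofReal M) ^ (2:ℝ) * I j := by
            rw [lintegral_indicator (hEjmeas j)]
    have hvelp : eLpNorm (fderiv ℝ v) 2 volume ≤ ENNReal.ofReal M * (I j) ^ ((1:ℝ)/2) := by
      rw [eLpNorm_eq_lintegral_rpow_enorm_toReal two_ne_zero ENNReal.ofNat_ne_top]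
      simp only [ENNReal.toReal_ofNat]
      calc (∫⁻ x, (‖fderiv ℝ v x‖₊ : ℝ≥0∞) ^ (2:ℝ)) ^ ((1:ℝ)/2)
          ≤ ((ENNReal.ofReal M) ^ (2:ℝ) * I j) ^ ((1:ℝ)/2) :=
            ENNReal.rpow_le_rpow hvint (by norm_num)
        _ = ENNReal.ofReal M * (I j) ^ ((1:ℝ)/2) := by
            rw [ENNReal.mul_rpow_of_nonneg _ _ (by norm_num : (0:ℝ) ≤ 1/2),
              ← ENNReal.rpow_mul]
            norm_num
    have hfinrank : Module.finrank ℝ (EuclideanSpace ℝ (Fin n)) = n :=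
      finrank_euclideanSpace_fin
    set p' : NNReal := Real.toNNReal p with hp'def
    have hp'coe : (p' : ℝ) = p := Real.coe_toNNReal p hppos.le
    have hp'inv : ((p' : ℝ))⁻¹ =
        ((2:NNReal):ℝ)⁻¹ - ((Module.finrank ℝ (EuclideanSpace ℝ (Fin n)) : ℝ))⁻¹ := by
      rw [hp'coe, hfinrank, hpdef]
      rw [inv_div]
      push_cast
      rw [inv_eq_one_div, inv_eq_one_div,
        div_sub_div _ _ (by norm_num : (2:ℝ) ≠ 0) (by positivity : (n:ℝ) ≠ 0),
        div_eq_div_iff (by positivity) (by positivity)]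
      ring
    have hsob : eLpNorm v (p' : ℝ≥0∞) volume ≤ (K : ℝ≥0∞) * eLpNorm (fderiv ℝ v) 2 volume := by
      have h := eLpNorm_le_eLpNorm_fderiv_of_eq
        (volume : Measure (EuclideanSpace ℝ (Fin n))) hvcd hvsupp
        (p := 2) (p' := p') one_le_two (by rw [hfinrank]; omega) hp'inv
      simpa [hKdef] using h
    have hp'0 : (p' : ℝ≥0∞) ≠ 0 := by
      simp only [ne_eq, ENNReal.coe_eq_zero]
      intro h
      rw [h] at hp'coe
      simp at hp'coe
      linarith
    have hp'top : (p' : ℝ≥0∞) ≠ ∞ := ENNReal.coe_ne_top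
    have hp'toReal : ((p' : ℝ≥0∞)).toReal = p := by
      rw [ENNReal.coe_toReal, hp'coe]
    have hmeasle : distFun volume u (c (j+1))
        ≤ volume {x | ENNReal.ofReal (c j) ≤ (‖v x‖₊ : ℝ≥0∞)} := by
      apply measure_mono
      intro x hx
      have hx' : c (j+1) < |u x| := hx
      have h2 : 2 ≤ |u x / c j| := by
        rw [abs_div, abs_of_pos hcj, le_div_iff₀ hcj]
        rw [hcsucc j] at hx'
        linarith
      have hvx : |v x| = c j := by
        show |c j * phiCut (u x / c j)| = c j
        rw [abs_mul, abs_phiCut_eq_one h2, mul_one, abs_of_pos hcj]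
      show ENNReal.ofReal (c j) ≤ (‖v x‖₊ : ℝ≥0∞)
      rw [← enorm_eq_nnnorm, ← ofReal_norm, Real.norm_eq_abs, hvx]
    have hcheb : ENNReal.ofReal (c j) * distFun volume u (c (j+1)) ^ (1/p)
        ≤ eLpNorm v (p' : ℝ≥0∞) volume := by
      have hch := mul_meas_ge_le_pow_eLpNorm' volume hp'0 hp'top
        hvcd.continuous.aestronglyMeasurable (ENNReal.ofReal (c j))
      rw [hp'toReal] at hch
      have hch2 := ENNReal.rpow_le_rpow hch (by positivity : (0:ℝ) ≤ 1/p)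
      rw [← ENNReal.rpow_mul (eLpNorm v (p' : ℝ≥0∞) volume),
        mul_one_div_cancel hppos.ne', ENNReal.rpow_one,
        ENNReal.mul_rpow_of_nonneg _ _ (by positivity : (0:ℝ) ≤ 1/p),
        ← ENNReal.rpow_mul (ENNReal.ofReal (c j)),
        mul_one_div_cancel hppos.ne', ENNReal.rpow_one] at hch2
      refine le_trans ?_ hch2
      exact mul_le_mul_right (ENNReal.rpow_le_rpow hmeasle (by positivity)) _
    calc ENNReal.ofReal (c j) * distFun volume u (c (j+1)) ^ (1/p)
        ≤ eLpNorm v (p' : ℝ≥0∞) volume := hcheb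
      _ ≤ (K : ℝ≥0∞) * eLpNorm (fderiv ℝ v) 2 volume := hsob
      _ ≤ (K : ℝ≥0∞) * (ENNReal.ofReal M * (I j) ^ ((1:ℝ)/2)) := mul_le_mul_right hvelp _
      _ = Kc * (I j) ^ ((1:ℝ)/2) := by rw [hKcdef]; ring
  -- right-hand side identification
  have hgrad : eLpNorm (fun x => ‖gradient u x‖) 2 volume = Itot ^ ((1:ℝ)/2) := by
    rw [eLpNorm_eq_lintegral_rpow_enorm_toReal two_ne_zero ENNReal.ofNat_ne_top]
    simp only [ENNReal.toReal_ofNat]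
    rw [hItotdef]
    congr 1
    apply lintegral_congr
    intro x
    congr 2
    rw [enorm_eq_nnnorm, nnnorm_norm, ENNReal.coe_inj]
    show ‖(InnerProductSpace.toDual ℝ _).symm (fderiv ℝ u x)‖₊ = _
    exact (InnerProductSpace.toDual ℝ _).symm.nnnorm_map _
  -- the Lorentz integral bound
  have hD : (∫⁻ s in Ioi (0:ℝ),
      (ENNReal.ofReal s * distFun volume u s ^ (1/p)) ^ (2:ℝ) / ENNReal.ofReal s)
      ≤ 8 * Kc ^ (2:ℝ) * Itot := by
    have hcover : Ioi (0:ℝ) = ⋃ j : ℤ, Ioc (c j) (c (j+1)) := by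
      ext x
      simp only [mem_Ioi, mem_iUnion]
      constructor
      · intro hx
        exact exists_mem_Ioc_zpow hx one_lt_two
      · rintro ⟨j, hj⟩
        exact (hcpos j).trans hj.1
    have hIocdisj : Pairwise (Function.onFun Disjoint (fun j : ℤ => Ioc (c j) (c (j+1)))) := by
      intro i j hij
      wlog hlt : i < j generalizing i j
      · exact (this hij.symm (by omega : j < i)).symm
      refine Set.disjoint_left.mpr ?_
      rintro x ⟨hi1, hi2⟩ ⟨hj1, hj2⟩
      have : c (i+1) ≤ c j := hcmono _ _ (by omega)
      linarith
    rw [hcover, lintegral_iUnion (fun j => measurableSet_Ioc) hIocdisj]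
    have hja : ∀ j : ℤ, (∫⁻ s in Ioc (c j) (c (j+1)),
        (ENNReal.ofReal s * distFun volume u s ^ (1/p)) ^ (2:ℝ) / ENNReal.ofReal s)
        ≤ 8 * Kc ^ (2:ℝ) * I (j-1) := by
      intro j
      have hkey := key (j-1)
      rw [show j - 1 + 1 = j by omega] at hkey
      have h2c : ENNReal.ofReal (c j) = 2 * ENNReal.ofReal (c (j-1)) := by
        have h := hcsucc (j-1)
        rw [show j - 1 + 1 = j by omega] at h
        rw [h, ENNReal.ofReal_mul (by norm_num : (0:ℝ) ≤ 2), ENNReal.ofReal_ofNat]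
      have hbd : ∀ s ∈ Ioc (c j) (c (j+1)),
          (ENNReal.ofReal s * distFun volume u s ^ (1/p)) ^ (2:ℝ) / ENNReal.ofReal s
          ≤ ENNReal.ofReal (c (j+1)) * distFun volume u (c j) ^ ((1/p) * 2) := by
        intro s hs
        have hs0 : 0 < s := (hcpos j).trans hs.1
        have ha0 : ENNReal.ofReal s ≠ 0 := (ENNReal.ofReal_pos.mpr hs0).ne'
        have hd : distFun volume u s ≤ distFun volume u (c j) :=
          measure_mono (fun x hx => hs.1.trans hx)
        have heq : (ENNReal.ofReal s * distFun volume u s ^ (1/p)) ^ (2:ℝ) / ENNReal.ofReal s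
            = ENNReal.ofReal s * distFun volume u s ^ ((1/p) * 2) := by
          rw [ENNReal.mul_rpow_of_nonneg _ _ (by norm_num : (0:ℝ) ≤ 2),
            ← ENNReal.rpow_mul, ENNReal.rpow_two, sq, mul_assoc,
            mul_comm (ENNReal.ofReal s) (ENNReal.ofReal s * distFun volume u s ^ (1/p*2)),
            mul_div_assoc, ENNReal.div_self ha0 ENNReal.ofReal_ne_top, mul_one]
        rw [heq]
        exact mul_le_mul' (ENNReal.ofReal_le_ofReal hs.2)
          (ENNReal.rpow_le_rpow hd (by positivity))
      calc (∫⁻ s in Ioc (c j) (c (j+1)),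
          (ENNReal.ofReal s * distFun volume u s ^ (1/p)) ^ (2:ℝ) / ENNReal.ofReal s)
          ≤ ∫⁻ _ in Ioc (c j) (c (j+1)),
            ENNReal.ofReal (c (j+1)) * distFun volume u (c j) ^ ((1/p) * 2) :=
            setLIntegral_mono' measurableSet_Ioc hbd
        _ = ENNReal.ofReal (c (j+1)) * distFun volume u (c j) ^ ((1/p) * 2)
            * ENNReal.ofReal (c j) := by
            rw [setLIntegral_const, Real.volume_Ioc]
            congr 2
            rw [hcsucc j]; ring
        _ = 2 * (ENNReal.ofReal (c j) * distFun volume u (c j) ^ ((1:ℝ)/p)) ^ (2:ℝ) := by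
            rw [ENNReal.mul_rpow_of_nonneg _ _ (by norm_num : (0:ℝ) ≤ 2),
              ← ENNReal.rpow_mul, hcsucc j,
              ENNReal.ofReal_mul (by norm_num : (0:ℝ) ≤ 2), ENNReal.ofReal_ofNat,
              ENNReal.rpow_two, sq]
            ring
        _ ≤ 2 * (2 * (Kc * I (j-1) ^ ((1:ℝ)/2))) ^ (2:ℝ) := by
            apply mul_le_mul_right
            apply ENNReal.rpow_le_rpow _ (by norm_num : (0:ℝ) ≤ 2)
            rw [h2c, mul_assoc]
            exact mul_le_mul_right hkey 2
        _ = 8 * Kc ^ (2:ℝ) * I (j-1) := by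
            rw [ENNReal.mul_rpow_of_nonneg _ _ (by norm_num : (0:ℝ) ≤ 2),
              ENNReal.mul_rpow_of_nonneg _ _ (by norm_num : (0:ℝ) ≤ 2),
              ← ENNReal.rpow_mul (I (j-1))]
            norm_num
            ring
    calc (∑' j : ℤ, ∫⁻ s in Ioc (c j) (c (j+1)),
        (ENNReal.ofReal s * distFun volume u s ^ (1/p)) ^ (2:ℝ) / ENNReal.ofReal s)
        ≤ ∑' j : ℤ, 8 * Kc ^ (2:ℝ) * I (j-1) := ENNReal.tsum_le_tsum hja
      _ = 8 * Kc ^ (2:ℝ) * ∑' j : ℤ, I (j-1) := ENNReal.tsum_mul_left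
      _ = 8 * Kc ^ (2:ℝ) * ∑' j : ℤ, I j := by
          congr 1
          exact (Equiv.subRight (1:ℤ)).tsum_eq I
      _ ≤ 8 * Kc ^ (2:ℝ) * Itot := mul_le_mul_right hsumI _
  -- final assembly
  have hCle : Cc ≤ ENNReal.ofReal (Cc.toReal + 1) := by
    calc Cc = ENNReal.ofReal Cc.toReal := (ENNReal.ofReal_toReal hCcne).symm
      _ ≤ ENNReal.ofReal (Cc.toReal + 1) := ENNReal.ofReal_le_ofReal (by linarith)
  rw [lorentzNorm, if_neg (by simp : (2:ℝ≥0∞) ≠ ∞)]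
  simp only [ENNReal.toReal_ofNat]
  rw [hgrad]
  calc ENNReal.ofReal p ^ (1/(2:ℝ)) *
      (∫⁻ s in Ioi (0:ℝ),
        (ENNReal.ofReal s * distFun volume u s ^ (1/p)) ^ (2:ℝ) / ENNReal.ofReal s) ^ (1/(2:ℝ))
      ≤ ENNReal.ofReal p ^ (1/(2:ℝ)) * (8 * Kc ^ (2:ℝ) * Itot) ^ (1/(2:ℝ)) := by
        exact mul_le_mul_right (ENNReal.rpow_le_rpow hD (by norm_num)) _
    _ = Cc * Itot ^ ((1:ℝ)/2) := by
        rw [ENNReal.mul_rpow_of_nonneg _ _ (by norm_num : (0:ℝ) ≤ 1/2),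
          ENNReal.mul_rpow_of_nonneg _ _ (by norm_num : (0:ℝ) ≤ 1/2),
          ← ENNReal.rpow_mul Kc]
        norm_num
        rw [hCcdef]
        ring
    _ ≤ ENNReal.ofReal (Cc.toReal + 1) * Itot ^ ((1:ℝ)/2) := mul_le_mul_left hCle _
end

section
/- (Weak-type Sobolev inequality.) Let n ≥ 2 and let 1 < p < n, and define p* by 1/p* = 1/p - 1/n. There is a constant C > 0, depending only on n and p, such that for every u ∈ C_c^∞(ℝⁿ), ‖u‖_{L^{p*,∞}(ℝⁿ)} ≤ C ‖∇u‖_{L^{p,∞}(ℝⁿ)}. -/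
open MeasureTheory ENNReal Set

lemma cutoff_exists : ∃ (φ : ℝ → ℝ) (K : ℝ), 0 < K ∧ ContDiff ℝ 1 φ ∧
    (∀ t, t^2 ≤ 1 → φ t = 0) ∧ (∀ t, 2 ≤ t^2 → φ t = 1) ∧
    (∀ t, |φ t| ≤ 1) ∧ (∀ t, |deriv φ t| ≤ K) := by
  set φ : ℝ → ℝ := fun t => Real.smoothTransition (t^2 - 1) with hφdef
  have hφ : ContDiff ℝ 1 φ := by
    exact (Real.smoothTransition.contDiff (n := 1)).comp
      ((contDiff_id.pow 2).sub contDiff_const)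
  have h0 : ∀ t, t^2 ≤ 1 → φ t = 0 := fun t ht =>
    Real.smoothTransition.zero_of_nonpos (by linarith)
  have h1 : ∀ t, 2 ≤ t^2 → φ t = 1 := fun t ht =>
    Real.smoothTransition.one_of_one_le (by linarith)
  have hb : ∀ t, |φ t| ≤ 1 := fun t => by
    rw [abs_le]
    exact ⟨by linarith [Real.smoothTransition.nonneg (t^2-1)],
      Real.smoothTransition.le_one (t^2-1)⟩
  have hderiv0 : ∀ t : ℝ, t ∉ Icc (-2:ℝ) 2 → deriv φ t = 0 := by
    intro t ht
    rw [mem_Icc, not_and_or, not_le, not_le] at ht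
    have h2 : 2 < t^2 := by rcases ht with h|h <;> nlinarith
    have : φ =ᶠ[nhds t] fun _ => 1 := by
      have hopen : IsOpen {s : ℝ | 2 < s^2} := isOpen_lt continuous_const (by continuity)
      filter_upwards [hopen.mem_nhds h2] with s hs
      exact h1 s hs.le
    rw [this.deriv_eq, deriv_const]
  have hcs : HasCompactSupport (deriv φ) := HasCompactSupport.intro isCompact_Icc hderiv0
  obtain ⟨K, hK⟩ := hcs.exists_bound_of_continuous (hφ.continuous_deriv le_rfl)
  refine ⟨φ, K + 1, ?_, hφ, h0, h1, hb, fun t => ?_⟩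
  · have h := hK 0; have : (0:ℝ) ≤ K := le_trans (norm_nonneg _) h; linarith
  · have := hK t; rw [Real.norm_eq_abs] at this; linarith

lemma weak_int_bound {α : Type*} [MeasurableSpace α] (μ : Measure α)
    (g : α → ℝ) (hg : Measurable g) {p q : ℝ} (hq : 0 < q) (hqp : q < p)
    {E : Set α} (hE : MeasurableSet E) (A : ℝ≥0∞)
    (hA : ∀ s : ℝ, 0 < s → μ {x | s < g x} ≤ A ^ p / (ENNReal.ofReal s) ^ p) :
    ∫⁻ x in E, (ENNReal.ofReal (g x)) ^ q ∂μ ≤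
      (1 + (2:ℝ≥0∞)^q * (1 - (2:ℝ≥0∞)^(q-p))⁻¹) * (A ^ q * μ E ^ (1 - q/p)) := by
  have hp : 0 < p := hq.trans hqp
  have h1mq : 0 < 1 - q/p := by
    have : q/p < 1 := (div_lt_one hp).mpr hqp
    linarith
  have hC1 : (1:ℝ≥0∞) ≤ 1 + (2:ℝ≥0∞)^q * (1 - (2:ℝ≥0∞)^(q-p))⁻¹ := le_self_add
  have hCne : (1 + (2:ℝ≥0∞)^q * (1 - (2:ℝ≥0∞)^(q-p))⁻¹) ≠ 0 := by simp
  -- trivial case : μ E = 0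
  by_cases hE0 : μ E = 0
  · rw [Measure.restrict_eq_zero.mpr hE0, lintegral_zero_measure]
    exact zero_le
  -- trivial case : A = 0
  by_cases hA0 : A = 0
  · have hgz : ∀ᵐ x ∂μ, g x ≤ 0 := by
      have hsub : {x | 0 < g x} ⊆ ⋃ k : ℕ, {x | 1/(k+1:ℝ) < g x} := by
        intro x hx
        obtain ⟨k, hk⟩ := exists_nat_one_div_lt (show (0:ℝ) < g x from hx)
        exact mem_iUnion.mpr ⟨k, hk⟩
      have hz : ∀ k : ℕ, μ {x | 1/(k+1:ℝ) < g x} = 0 := by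
        intro k
        refine le_antisymm (le_trans (hA _ (by positivity)) ?_) zero_le
        rw [hA0, ENNReal.zero_rpow_of_pos hp, ENNReal.zero_div]
      have : μ {x | 0 < g x} = 0 := by
        refine le_antisymm (le_trans (measure_mono hsub) ?_) zero_le
        refine le_trans (measure_iUnion_le _) ?_
        simp only [one_div] at hz
        simp [hz]
      filter_upwards [measure_eq_zero_iff_ae_notMem.mp this] with x hx
      simpa using hx
    have : ∫⁻ x in E, (ENNReal.ofReal (g x)) ^ q ∂μ = 0 := by
      have h0 : ∀ᵐ x ∂(μ.restrict E), (ENNReal.ofReal (g x)) ^ q = 0 := by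
        filter_upwards [ae_restrict_of_ae hgz] with x hx
        rw [ENNReal.ofReal_eq_zero.mpr hx, ENNReal.zero_rpow_of_pos hq]
      rw [lintegral_congr_ae h0, lintegral_zero]
    rw [this]; exact zero_le
  -- trivial case : μ E = ∞
  by_cases hEtop : μ E = ∞
  · have h1 : μ E ^ (1 - q/p) = ∞ := by
      rw [hEtop]; exact ENNReal.top_rpow_of_pos h1mq
    have h2 : A ^ q ≠ 0 := by simp [ENNReal.rpow_eq_zero_iff, hA0, not_lt.mpr hq.le]
    rw [h1, ENNReal.mul_top h2, ENNReal.mul_top hCne]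
    exact le_top
  -- trivial case : A = ∞
  by_cases hAtop : A = ∞
  · have h1 : A ^ q = ∞ := by rw [hAtop]; exact ENNReal.top_rpow_of_pos hq
    have h2 : μ E ^ (1 - q/p) ≠ 0 := by
      simp [ENNReal.rpow_eq_zero_iff, hE0, not_lt.mpr h1mq.le]
    rw [h1, ENNReal.top_mul h2, ENNReal.mul_top hCne]
    exact le_top
  -- main case
  have hAp0 : A ^ p ≠ 0 := by simp [ENNReal.rpow_eq_zero_iff, hA0, not_lt.mpr hp.le, hAtop]
  have hAptop : A ^ p ≠ ∞ := by simp [ENNReal.rpow_eq_top_iff, hA0, hAtop, not_lt.mpr hp.le]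
  set b : ℝ≥0∞ := A ^ p / μ E with hb
  have hb0 : b ≠ 0 := by
    rw [hb, Ne, ENNReal.div_eq_zero_iff]; push_neg; exact ⟨hAp0, hEtop⟩
  have hbtop : b ≠ ∞ := by
    rw [hb, Ne, ENNReal.div_eq_top]; push_neg
    exact ⟨fun _ => hE0, fun h => absurd h hAptop⟩
  set a : ℝ≥0∞ := b ^ (1/p) with ha
  have ha0 : a ≠ 0 := by
    simp [ha, ENNReal.rpow_eq_zero_iff, hb0, hbtop]
  have hatop : a ≠ ∞ := by
    simp [ha, ENNReal.rpow_eq_top_iff, hb0, hbtop]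
  have hap : a ^ p = b := by
    rw [ha, ← ENNReal.rpow_mul, one_div, inv_mul_cancel₀ hp.ne', ENNReal.rpow_one]
  have hap0 : a ^ p ≠ 0 := by simp [ENNReal.rpow_eq_zero_iff, ha0, hatop]
  have haptop : a ^ p ≠ ∞ := by simp [ENNReal.rpow_eq_top_iff, ha0, hatop]
  have hapE' : a ^ p * μ E = A ^ p := by
    rw [hap, hb, ENNReal.div_mul_cancel hE0 hEtop]
  have hapE : A ^ p / a ^ p = μ E := by
    rw [← hapE', mul_comm, mul_div_assoc, ENNReal.div_self hap0 haptop, mul_one]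
  set s0 : ℝ := a.toReal with hs0
  have hs0pos : 0 < s0 := ENNReal.toReal_pos ha0 hatop
  have hoa : ENNReal.ofReal s0 = a := ENNReal.ofReal_toReal hatop
  -- the key product identity
  have haqE : a ^ q * μ E = A ^ q * μ E ^ (1 - q/p) := by
    have h1 : a ^ q = A ^ q / μ E ^ (q/p) := by
      rw [ha, ← ENNReal.rpow_mul, hb, ENNReal.div_rpow_of_nonneg _ _ (by positivity),
        ← ENNReal.rpow_mul, show p * (1/p*q) = q by field_simp, show 1/p*q = q/p by field_simp]
    rw [h1, ENNReal.rpow_sub 1 (q/p) hE0 hEtop, ENNReal.rpow_one,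
      div_eq_mul_inv]
    simp only [div_eq_mul_inv]
    ring
  -- splitting
  set r : ℝ≥0∞ := (2:ℝ≥0∞)^(q-p) with hr
  have h2ne : (2:ℝ≥0∞) ≠ 0 := by norm_num
  have h2net : (2:ℝ≥0∞) ≠ ∞ := by norm_num
  have hofr : ∀ m : ℕ, ENNReal.ofReal (s0 * 2^m) = a * 2^m := by
    intro m
    rw [ENNReal.ofReal_mul hs0pos.le, hoa, ENNReal.ofReal_pow (by norm_num : (0:ℝ) ≤ 2) m]
    norm_num
  have hpow2 : ∀ (m : ℕ) (c : ℝ), ((2:ℝ≥0∞)^m) ^ c = (2:ℝ≥0∞) ^ ((m:ℝ) * c) := by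
    intro m c; rw [← ENNReal.rpow_natCast 2 m, ← ENNReal.rpow_mul]
  set S : ℕ → Set α := fun k => {x | s0 * 2^k < g x ∧ g x ≤ s0 * 2^(k+1)} with hS
  have hSm : ∀ k, MeasurableSet (S k) := fun k =>
    (measurableSet_lt measurable_const hg).inter (measurableSet_le hg measurable_const)
  have hcover : {x | s0 < g x} ⊆ ⋃ k, S k := by
    intro x hx
    have hx' : s0 < g x := hx
    have hex : ∃ n : ℕ, g x ≤ s0 * 2 ^ n := by
      obtain ⟨n, hn⟩ := pow_unbounded_of_one_lt (g x / s0) (by norm_num : (1:ℝ) < 2)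
      exact ⟨n, by rw [div_lt_iff₀ hs0pos] at hn; nlinarith⟩
    set m := Nat.find hex with hm
    have hm0 : m ≠ 0 := by
      intro h
      have := Nat.find_spec hex
      rw [← hm, h] at this
      simp at this
      linarith
    refine mem_iUnion.mpr ⟨m - 1, ?_, ?_⟩
    · have := Nat.find_min hex (m := m - 1) (by omega)
      push_neg at this
      exact this
    · have := Nat.find_spec hex
      rw [← hm] at this
      rwa [show m - 1 + 1 = m from by omega]
  have hsplit : ∫⁻ x in E, (ENNReal.ofReal (g x)) ^ q ∂μ ≤
      ∫⁻ x in E ∩ {x | g x ≤ s0}, (ENNReal.ofReal (g x)) ^ q ∂μ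
        + ∫⁻ x in {x | s0 < g x}, (ENNReal.ofReal (g x)) ^ q ∂μ := by
    refine le_trans (lintegral_mono_set ?_) (lintegral_union_le _ _ _)
    intro x hx
    by_cases h : g x ≤ s0
    · exact Or.inl ⟨hx, h⟩
    · exact Or.inr (not_le.mp h)
  have T1 : ∫⁻ x in E ∩ {x | g x ≤ s0}, (ENNReal.ofReal (g x)) ^ q ∂μ ≤ a ^ q * μ E := by
    calc ∫⁻ x in E ∩ {x | g x ≤ s0}, (ENNReal.ofReal (g x)) ^ q ∂μ
        ≤ ∫⁻ _ in E ∩ {x | g x ≤ s0}, a ^ q ∂μ := by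
          refine setLIntegral_mono' (hE.inter (measurableSet_le hg measurable_const)) ?_
          intro x hx
          exact ENNReal.rpow_le_rpow (by rw [← hoa]; exact ENNReal.ofReal_le_ofReal hx.2) hq.le
      _ = a ^ q * μ (E ∩ {x | g x ≤ s0}) := setLIntegral_const _ _
      _ ≤ a ^ q * μ E := mul_le_mul_right (measure_mono inter_subset_left) _
  have hApa : A ^ p * (a ^ p)⁻¹ = μ E := by rw [← div_eq_mul_inv, hapE]
  have htwo : ∀ k : ℕ, (2:ℝ≥0∞) ^ (((k+1:ℕ):ℝ) * q) * ((2:ℝ≥0∞) ^ ((k:ℝ) * p))⁻¹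
      = (2:ℝ≥0∞) ^ q * r ^ k := by
    intro k
    rw [← ENNReal.rpow_neg, ← ENNReal.rpow_add _ _ h2ne h2net, hr,
      ← ENNReal.rpow_natCast ((2:ℝ≥0∞) ^ (q - p)) k, ← ENNReal.rpow_mul,
      ← ENNReal.rpow_add _ _ h2ne h2net]
    congr 1
    push_cast
    ring
  have step3 : ∀ k : ℕ, (a * 2^(k+1)) ^ q * (A ^ p / (a * 2^k) ^ p)
      = (2:ℝ≥0∞) ^ q * (a ^ q * μ E) * r ^ k := by
    intro k
    rw [ENNReal.mul_rpow_of_nonneg _ _ hq.le, ENNReal.mul_rpow_of_nonneg _ _ hp.le,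
      hpow2, hpow2, div_eq_mul_inv,
      ENNReal.mul_inv (Or.inl hap0) (Or.inl haptop)]
    calc a ^ q * 2 ^ ((((k+1):ℕ):ℝ) * q) * (A ^ p * ((a ^ p)⁻¹ * ((2:ℝ≥0∞) ^ ((k:ℝ) * p))⁻¹))
        = (A ^ p * (a ^ p)⁻¹) * (a ^ q *
            ((2:ℝ≥0∞) ^ ((((k+1):ℕ):ℝ) * q) * ((2:ℝ≥0∞) ^ ((k:ℝ) * p))⁻¹)) := by ring
      _ = μ E * (a ^ q * ((2:ℝ≥0∞) ^ q * r ^ k)) := by rw [hApa, htwo]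
      _ = (2:ℝ≥0∞) ^ q * (a ^ q * μ E) * r ^ k := by ring
  have perk : ∀ k : ℕ, ∫⁻ x in S k, (ENNReal.ofReal (g x)) ^ q ∂μ
      ≤ (2:ℝ≥0∞) ^ q * (a ^ q * μ E) * r ^ k := by
    intro k
    calc ∫⁻ x in S k, (ENNReal.ofReal (g x)) ^ q ∂μ
        ≤ ∫⁻ _ in S k, (a * 2^(k+1)) ^ q ∂μ := by
          refine setLIntegral_mono' (hSm k) ?_
          intro x hx
          refine ENNReal.rpow_le_rpow ?_ hq.le
          rw [← hofr (k+1)]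
          exact ENNReal.ofReal_le_ofReal hx.2
      _ = (a * 2^(k+1)) ^ q * μ (S k) := setLIntegral_const _ _
      _ ≤ (a * 2^(k+1)) ^ q * (A ^ p / (a * 2^k) ^ p) := by
          refine mul_le_mul_right ?_ _
          refine le_trans (measure_mono (fun x hx => hx.1)) ?_
          have := hA (s0 * 2^k) (by positivity)
          rwa [hofr k] at this
      _ = (2:ℝ≥0∞) ^ q * (a ^ q * μ E) * r ^ k := step3 k
  have T2 : ∫⁻ x in {x | s0 < g x}, (ENNReal.ofReal (g x)) ^ q ∂μ
      ≤ (2:ℝ≥0∞) ^ q * (1 - r)⁻¹ * (a ^ q * μ E) := by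
    calc ∫⁻ x in {x | s0 < g x}, (ENNReal.ofReal (g x)) ^ q ∂μ
        ≤ ∫⁻ x in ⋃ k, S k, (ENNReal.ofReal (g x)) ^ q ∂μ := lintegral_mono_set hcover
      _ ≤ ∑' k, ∫⁻ x in S k, (ENNReal.ofReal (g x)) ^ q ∂μ := lintegral_iUnion_le _ _
      _ ≤ ∑' k : ℕ, (2:ℝ≥0∞) ^ q * (a ^ q * μ E) * r ^ k := ENNReal.tsum_le_tsum perk
      _ = (2:ℝ≥0∞) ^ q * (a ^ q * μ E) * (1 - r)⁻¹ := by
          rw [ENNReal.tsum_mul_left, ENNReal.tsum_geometric]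
      _ = (2:ℝ≥0∞) ^ q * (1 - r)⁻¹ * (a ^ q * μ E) := by ring
  calc ∫⁻ x in E, (ENNReal.ofReal (g x)) ^ q ∂μ
      ≤ a ^ q * μ E + (2:ℝ≥0∞) ^ q * (1 - r)⁻¹ * (a ^ q * μ E) :=
        le_trans hsplit (add_le_add T1 T2)
    _ = (1 + (2:ℝ≥0∞) ^ q * (1 - r)⁻¹) * (a ^ q * μ E) := by ring
    _ = (1 + (2:ℝ≥0∞) ^ q * (1 - r)⁻¹) * (A ^ q * μ E ^ (1 - q/p)) := by rw [haqE]

lemma norm_fderiv_le_abs_deriv (f : ℝ → ℝ) (t : ℝ) : ‖fderiv ℝ f t‖ ≤ |deriv f t| := by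
  refine ContinuousLinearMap.opNorm_le_bound _ (abs_nonneg _) fun s => ?_
  have h1 : fderiv ℝ f t s = s * deriv f t := by
    have hs : s = s • (1:ℝ) := by norm_num
    rw [hs, _root_.map_smul, fderiv_apply_one_eq_deriv]
    simp [smul_eq_mul]
  rw [h1, Real.norm_eq_abs, Real.norm_eq_abs, abs_mul]
  nlinarith [abs_nonneg s, abs_nonneg (deriv f t)]

set_option maxHeartbeats 2000000 in
/-- Weak-type Sobolev inequality: for `n ≥ 2`, `1 < p < n` and `1/p* = 1/p - 1/n`,
`‖u‖_{L^{p*,∞}(ℝⁿ)} ≤ C ‖∇u‖_{L^{p,∞}(ℝⁿ)}` for all `u ∈ C_c^∞(ℝⁿ)`. -/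
theorem weak_sobolev
    (n : ℕ) (hn : 2 ≤ n) (p ps : ℝ) (hp1 : 1 < p) (hpn : p < n)
    (hps : 1/ps = 1/p - 1/(n:ℝ)) :
    ∃ C : ℝ, 0 < C ∧ ∀ u : EuclideanSpace ℝ (Fin n) → ℝ,
      ContDiff ℝ (⊤ : ℕ∞) u → HasCompactSupport u →
      weakNorm volume u ps
        ≤ ENNReal.ofReal C * weakNorm volume (fun x => ‖gradient u x‖) p := by
  classical
  obtain ⟨φ, K, hK0, hφ1, hφz, hφone, hφb, hφK⟩ := cutoff_exists
  have hnr : (0:ℝ) < n := by positivity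
  have hp0 : (0:ℝ) < p := by linarith
  -- exponents
  set q : ℝ := (1+p)/2 with hqdef
  have hq1 : 1 < q := by rw [hqdef]; linarith
  have hq0 : 0 < q := by linarith
  have hqp : q < p := by rw [hqdef]; linarith
  have hqn : q < n := by linarith
  set q' : ℝ := (1/q - 1/(n:ℝ))⁻¹ with hq'def
  have hq'aux : 0 < 1/q - 1/(n:ℝ) := by
    rw [sub_pos]
    exact one_div_lt_one_div_of_lt hq0 hqn
  have hq'0 : 0 < q' := by rw [hq'def]; positivity
  have hq'inv : 1/q' = 1/q - 1/(n:ℝ) := by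
    rw [hq'def, one_div, inv_inv]
  have hps_aux : 0 < 1/p - 1/(n:ℝ) := by
    rw [sub_pos]
    exact one_div_lt_one_div_of_lt hp0 hpn
  have hps0 : 0 < ps := by
    have : 0 < 1/ps := hps ▸ hps_aux
    exact one_div_pos.mp this
  set γ : ℝ := 1/q - 1/p with hγdef
  have hγ0 : 0 < γ := by
    rw [hγdef, sub_pos]
    exact one_div_lt_one_div_of_lt hq0 hqp
  set α : ℝ := ps * γ with hαdef
  have hα0 : 0 < α := by positivity
  set β : ℝ := q'/ps with hβdef
  have hβ0 : 0 < β := by positivity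
  have hq'ps : 1/ps < 1/q' := by
    rw [hq'inv, hps]
    have := one_div_lt_one_div_of_lt hq0 hqp
    linarith
  have hq'lt : q' < ps := by
    have h := one_div_lt_one_div_of_lt (by positivity : (0:ℝ) < 1/ps) hq'ps
    rwa [one_div_one_div, one_div_one_div] at h
  have hβ1 : β < 1 := (div_lt_one hps0).mpr hq'lt
  have hβle : β ≤ 1 := hβ1.le
  have hsum : γ + 1/ps = 1/q' := by
    rw [hγdef, hps, hq'inv]; ring
  have hαβ : α * β = 1 - β := by
    have h1 : α * β = γ * q' := by
      rw [hαdef, hβdef]; field_simp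
    have h2 : γ * q' = (1/q' - 1/ps) * q' := by
      have : γ = 1/q' - 1/ps := by linarith [hsum]
      rw [this]
    rw [h1, h2, sub_mul, one_div, inv_mul_cancel₀ hq'0.ne', hβdef]
    field_simp
  have hq's : 1/q' * β = 1/ps := by
    rw [hβdef]; field_simp
  -- NNReal exponents
  set qn : NNReal := q.toNNReal with hqndef
  set q'n : NNReal := q'.toNNReal with hq'ndef
  have hqnc : (qn : ℝ) = q := Real.coe_toNNReal q hq0.le
  have hq'nc : (q'n : ℝ) = q' := Real.coe_toNNReal q' hq'0.le
  have hqn1 : 1 ≤ qn := by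
    rw [← NNReal.coe_le_coe, hqnc]; simpa using hq1.le
  have hq'n0 : (q'n : ℝ≥0∞) ≠ 0 := by
    simp only [ne_eq, ENNReal.coe_eq_zero]
    intro h
    rw [h] at hq'nc
    simp at hq'nc
    linarith
  have hq'ntop : (q'n : ℝ≥0∞) ≠ ⊤ := ENNReal.coe_ne_top
  have hq'ntor : ((q'n : ℝ≥0∞)).toReal = q' := by
    rw [ENNReal.coe_toReal, hq'nc]
  have hqn0 : (qn : ℝ≥0∞) ≠ 0 := by
    simp only [ne_eq, ENNReal.coe_eq_zero]
    intro h
    rw [h] at hqnc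
    simp at hqnc
    linarith
  have hqntop : (qn : ℝ≥0∞) ≠ ⊤ := ENNReal.coe_ne_top
  have hqntor : ((qn : ℝ≥0∞)).toReal = q := by
    rw [ENNReal.coe_toReal, hqnc]
  have hfr : (0:ℕ) < Module.finrank ℝ (EuclideanSpace ℝ (Fin n)) := by
    rw [finrank_euclideanSpace_fin]; omega
  have hp'eq : ((q'n : ℝ))⁻¹ = ((qn:ℝ))⁻¹ - ((Module.finrank ℝ (EuclideanSpace ℝ (Fin n)) : ℝ))⁻¹ := by
    rw [finrank_euclideanSpace_fin, hqnc, hq'nc, ← one_div, ← one_div, ← one_div, hq'inv]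
  -- constants
  set CS : NNReal := eLpNormLESNormFDerivOfEqInnerConst (E := EuclideanSpace ℝ (Fin n)) volume qn with hCSdef
  set CW : ℝ≥0∞ := 1 + (2:ℝ≥0∞)^q * (1 - (2:ℝ≥0∞)^(q-p))⁻¹ with hCWdef
  have hCWtop : CW ≠ ⊤ := by
    rw [hCWdef]
    have h1 : (2:ℝ≥0∞)^q ≠ ⊤ := ENNReal.rpow_ne_top_of_nonneg hq0.le (by norm_num)
    have h2 : (2:ℝ≥0∞)^(q-p) < 1 := by
      calc (2:ℝ≥0∞)^(q-p) < (2:ℝ≥0∞)^(0:ℝ) :=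
            ENNReal.rpow_lt_rpow_of_exponent_lt (by norm_num) (by norm_num) (by linarith)
        _ = 1 := ENNReal.rpow_zero
    have h3 : (1 - (2:ℝ≥0∞)^(q-p))⁻¹ ≠ ⊤ := by
      rw [ENNReal.inv_ne_top, ne_eq, tsub_eq_zero_iff_le]
      exact not_le.mpr h2
    exact ENNReal.add_ne_top.mpr ⟨by norm_num, ENNReal.mul_ne_top h1 h3⟩
  set D : ℝ≥0∞ := (CS : ℝ≥0∞) * ENNReal.ofReal K * CW ^ (1/q) with hDdef
  have hDtop : D ≠ ⊤ := by
    rw [hDdef]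
    exact ENNReal.mul_ne_top (ENNReal.mul_ne_top ENNReal.coe_ne_top ENNReal.ofReal_ne_top)
      (ENNReal.rpow_ne_top_of_nonneg (by positivity) hCWtop)
  set G : ℝ≥0∞ := ENNReal.ofReal (Real.sqrt 2) * (2:ℝ≥0∞)^(α*β) * D ^ β with hGdef
  have hGtop : G ≠ ⊤ := by
    rw [hGdef]
    exact ENNReal.mul_ne_top (ENNReal.mul_ne_top ENNReal.ofReal_ne_top
      (ENNReal.rpow_ne_top_of_nonneg (by positivity) (by norm_num)))
      (ENNReal.rpow_ne_top_of_nonneg hβ0.le hDtop)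
  have hGβtop : G ^ (1/β) ≠ ⊤ := ENNReal.rpow_ne_top_of_nonneg (by positivity) hGtop
  refine ⟨max 1 ((G ^ (1/β)).toReal), lt_of_lt_of_le one_pos (le_max_left _ _), ?_⟩
  intro u hu hsupp
  have hu1 : ContDiff ℝ 1 u := hu.of_le (by simp)
  have hucont : Continuous u := hu1.continuous
  have hgradnorm : (fun x => ‖gradient u x‖) = (fun x => ‖fderiv ℝ u x‖) := by
    funext x
    rw [gradient]
    exact LinearIsometryEquiv.norm_map _ _
  rw [hgradnorm]
  set g : EuclideanSpace ℝ (Fin n) → ℝ := fun x => ‖fderiv ℝ u x‖ with hgdef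
  have hgcont : Continuous g := (hu.continuous_fderiv (by simp)).norm
  have hgmeas : Measurable g := hgcont.measurable
  set A : ℝ≥0∞ := weakNorm volume g p with hAdef
  set M : ℝ≥0∞ := weakNorm volume u ps with hMdef
  -- weak bound hypothesis for g
  have hA : ∀ s : ℝ, 0 < s → volume {x | s < g x} ≤ A ^ p / (ENNReal.ofReal s) ^ p := by
    intro s hs
    have h1 : ENNReal.ofReal s * (distFun volume g s) ^ (1/p) ≤ A := by
      rw [hAdef, weakNorm]
      exact le_iSup (fun t : Ioi (0:ℝ) =>
        ENNReal.ofReal t.1 * distFun volume g t.1 ^ (1/p)) ⟨s, hs⟩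
    have h2 : distFun volume g s = volume {x | s < g x} := by
      rw [distFun]
      congr 1
      ext x
      simp [hgdef, abs_of_nonneg (norm_nonneg (fderiv ℝ u x))]
    rw [h2] at h1
    have h3 : (volume {x | s < g x}) ^ (1/p) ≤ A / ENNReal.ofReal s := by
      rw [ENNReal.le_div_iff_mul_le (Or.inl (by simp [hs])) (Or.inl ENNReal.ofReal_ne_top)]
      rw [mul_comm]
      exact h1
    calc volume {x | s < g x}
        = ((volume {x | s < g x}) ^ (1/p)) ^ p := by
          rw [← ENNReal.rpow_mul, one_div, inv_mul_cancel₀ hp0.ne', ENNReal.rpow_one]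
      _ ≤ (A / ENNReal.ofReal s) ^ p := ENNReal.rpow_le_rpow h3 hp0.le
      _ = A ^ p / (ENNReal.ofReal s) ^ p := ENNReal.div_rpow_of_nonneg _ _ hp0.le
  -- M is finite
  have hMtop : M ≠ ⊤ := by
    obtain ⟨B, hB⟩ := hsupp.exists_bound_of_continuous hucont
    have hB0 : 0 ≤ B := le_trans (norm_nonneg _) (hB Classical.ofNonempty)
    have hT : volume (tsupport u) < ⊤ := hsupp.measure_lt_top
    have hbound : ∀ s : Ioi (0:ℝ),
        ENNReal.ofReal s.1 * distFun volume u s.1 ^ (1/ps)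
          ≤ ENNReal.ofReal (B+1) * (volume (tsupport u)) ^ (1/ps) := by
      rintro ⟨s, hs⟩
      by_cases hsB : s ≤ B + 1
      · have h1 : distFun volume u s ≤ volume (tsupport u) := by
          apply measure_mono
          intro x hx
          have : u x ≠ 0 := by
            intro h
            simp only [mem_setOf_eq, h, abs_zero] at hx
            exact absurd hx (not_lt.mpr (le_of_lt hs))
          exact subset_tsupport u this
        exact mul_le_mul' (ENNReal.ofReal_le_ofReal hsB)
          (ENNReal.rpow_le_rpow h1 (by positivity))
      · have h1 : distFun volume u s = 0 := by
          rw [distFun]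
          convert measure_empty (μ := volume)
          ext x
          simp only [mem_setOf_eq, mem_empty_iff_false, iff_false, not_lt]
          calc |u x| = ‖u x‖ := (Real.norm_eq_abs _).symm
            _ ≤ B := hB x
            _ ≤ s := by linarith [not_le.mp hsB]
        rw [h1, ENNReal.zero_rpow_of_pos (by positivity), mul_zero]
        exact zero_le
    have : M ≤ ENNReal.ofReal (B+1) * (volume (tsupport u)) ^ (1/ps) := by
      rw [hMdef, weakNorm]
      exact iSup_le hbound
    exact ne_top_of_le_ne_top
      (ENNReal.mul_ne_top ENNReal.ofReal_ne_top
        (ENNReal.rpow_ne_top_of_nonneg (by positivity) hT.ne)) this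
  -- key analytic step
  have key1 : ∀ l : ℝ, 0 < l →
      ENNReal.ofReal l * (distFun volume u (Real.sqrt 2 * l)) ^ (1/q')
        ≤ D * (A * (distFun volume u (l/2)) ^ γ) := by
    intro l hl
    set ψ : ℝ → ℝ := fun t => l * φ (t / l) with hψdef
    set v : EuclideanSpace ℝ (Fin n) → ℝ := ψ ∘ u with hvdef
    have hψ1 : ContDiff ℝ 1 ψ := contDiff_const.mul (hφ1.comp (contDiff_id.div_const l))
    have hv1 : ContDiff ℝ 1 v := hψ1.comp hu1
    have hψ0 : ψ 0 = 0 := by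
      rw [hψdef]
      simp only [zero_div]
      rw [hφz 0 (by norm_num), mul_zero]
    have hv2 : HasCompactSupport v := hsupp.comp_left hψ0
    -- derivative of ψ
    have hψd : ∀ t : ℝ, deriv ψ t = deriv φ (t / l) := by
      intro t
      have h1 : HasDerivAt (fun t : ℝ => t / l) (1/l) t := (hasDerivAt_id t).div_const l
      have h2 : HasDerivAt φ (deriv φ (t/l)) (t/l) :=
        (hφ1.differentiable one_ne_zero (t/l)).hasDerivAt
      have h3 : HasDerivAt ψ (l * (deriv φ (t/l) * (1/l))) t := by
        have := (h2.comp t h1).const_mul l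
        simpa [hψdef, Function.comp] using this
      rw [h3.deriv]
      field_simp
    -- Sobolev inequality for v
    have SOB : eLpNorm v (q'n : ℝ≥0∞) volume
        ≤ (CS : ℝ≥0∞) * eLpNorm (fderiv ℝ v) (qn : ℝ≥0∞) volume :=
      eLpNorm_le_eLpNorm_fderiv_of_eq_inner volume hv1 hv2 hqn1 hfr hp'eq
    -- Chebyshev
    have hincl : {x : EuclideanSpace ℝ (Fin n) | Real.sqrt 2 * l < |u x|}
        ⊆ {x | ENNReal.ofReal l ≤ (‖v x‖₊ : ℝ≥0∞)} := by
      intro x hx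
      have hx' : Real.sqrt 2 * l < |u x| := hx
      have hsq : (0:ℝ) ≤ Real.sqrt 2 := Real.sqrt_nonneg 2
      have h2l : 2 * l^2 < (u x)^2 := by
        have h1 : (Real.sqrt 2 * l) * (Real.sqrt 2 * l) < |u x| * |u x| :=
          mul_self_lt_mul_self (by positivity) hx'
        have e : (Real.sqrt 2 * l) * (Real.sqrt 2 * l) = 2 * l^2 := by
          rw [show (Real.sqrt 2 * l) * (Real.sqrt 2 * l)
            = (Real.sqrt 2 * Real.sqrt 2) * (l * l) from by ring,
            Real.mul_self_sqrt (by norm_num : (0:ℝ) ≤ 2)]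
          ring
        rw [abs_mul_abs_self] at h1
        rw [← sq (u x)] at h1
        linarith
      have hφ2 : φ (u x / l) = 1 := by
        apply hφone
        rw [div_pow, le_div_iff₀ (by positivity)]
        linarith
      have hvx : v x = l := by
        rw [hvdef]
        simp only [Function.comp_apply, hψdef]
        rw [hφ2, mul_one]
      have : (‖v x‖₊ : ℝ≥0∞) = ENNReal.ofReal l := by
        rw [hvx]; exact Real.enorm_eq_ofReal hl.le
      exact le_of_eq this.symm
    have CHEB : ENNReal.ofReal l * (distFun volume u (Real.sqrt 2 * l)) ^ (1/q')
        ≤ eLpNorm v (q'n : ℝ≥0∞) volume := by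
      have hc := mul_meas_ge_le_pow_eLpNorm' volume hq'n0 hq'ntop
        hv1.continuous.aestronglyMeasurable (ENNReal.ofReal l)
      rw [hq'ntor] at hc
      have hmono : distFun volume u (Real.sqrt 2 * l)
          ≤ volume {x | ENNReal.ofReal l ≤ (‖v x‖₊ : ℝ≥0∞)} := measure_mono hincl
      have h1 : (ENNReal.ofReal l) ^ q' * distFun volume u (Real.sqrt 2 * l)
          ≤ eLpNorm v (q'n : ℝ≥0∞) volume ^ q' :=
        le_trans (mul_le_mul_right hmono _) hc
      calc ENNReal.ofReal l * (distFun volume u (Real.sqrt 2 * l)) ^ (1/q')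
          = ((ENNReal.ofReal l) ^ q' * distFun volume u (Real.sqrt 2 * l)) ^ (1/q') := by
            rw [ENNReal.mul_rpow_of_nonneg _ _ (by positivity), one_div,
              ENNReal.rpow_rpow_inv hq'0.ne']
        _ ≤ (eLpNorm v (q'n : ℝ≥0∞) volume ^ q') ^ (1/q') :=
            ENNReal.rpow_le_rpow h1 (by positivity)
        _ = eLpNorm v (q'n : ℝ≥0∞) volume := by
            rw [one_div, ENNReal.rpow_rpow_inv hq'0.ne']
    -- gradient bound
    set Eset : Set (EuclideanSpace ℝ (Fin n)) := {x | l/2 < |u x|} with hEsetdef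
    have hEm : MeasurableSet Eset := (isOpen_lt continuous_const hucont.abs).measurableSet
    have hpt : ∀ x, (‖fderiv ℝ v x‖₊ : ℝ≥0∞) ^ q
        ≤ (ENNReal.ofReal K) ^ q
          * Eset.indicator (fun y => (ENNReal.ofReal (g y)) ^ q) x := by
      intro x
      by_cases hx : x ∈ Eset
      · rw [indicator_of_mem hx]
        have hdu : DifferentiableAt ℝ u x := hu1.differentiable one_ne_zero x
        have hdψ : DifferentiableAt ℝ ψ (u x) := hψ1.differentiable one_ne_zero (u x)
        have hcomp : fderiv ℝ v x = (fderiv ℝ ψ (u x)).comp (fderiv ℝ u x) :=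
          fderiv_comp x hdψ hdu
        have hb : ‖fderiv ℝ v x‖ ≤ K * g x := by
          rw [hcomp]
          refine le_trans (ContinuousLinearMap.opNorm_comp_le _ _) ?_
          refine mul_le_mul ?_ le_rfl (norm_nonneg _) hK0.le
          refine le_trans (norm_fderiv_le_abs_deriv ψ (u x)) ?_
          rw [hψd (u x)]
          exact hφK _
        calc (‖fderiv ℝ v x‖₊ : ℝ≥0∞) ^ q
            = (ENNReal.ofReal ‖fderiv ℝ v x‖) ^ q := by rw [ofReal_norm]; rfl
          _ ≤ (ENNReal.ofReal (K * g x)) ^ q :=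
              ENNReal.rpow_le_rpow (ENNReal.ofReal_le_ofReal hb) hq0.le
          _ = (ENNReal.ofReal K * ENNReal.ofReal (g x)) ^ q := by
              rw [ENNReal.ofReal_mul hK0.le]
          _ = (ENNReal.ofReal K) ^ q * (ENNReal.ofReal (g x)) ^ q :=
              ENNReal.mul_rpow_of_nonneg _ _ hq0.le
      · rw [indicator_of_notMem hx, mul_zero]
        have hxle : |u x| < l := by
          have : ¬ (l/2 < |u x|) := hx
          push_neg at this
          linarith
        have hopen : IsOpen {y : EuclideanSpace ℝ (Fin n) | |u y| < l} :=
          isOpen_lt hucont.abs continuous_const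
        have hev : v =ᶠ[nhds x] (fun _ => (0:ℝ)) := by
          filter_upwards [hopen.mem_nhds hxle] with y hy
          have hy' : |u y| < l := hy
          have : φ (u y / l) = 0 := by
            apply hφz
            rw [div_pow, div_le_one (by positivity)]
            calc (u y)^2 = |u y|^2 := (sq_abs _).symm
              _ ≤ l^2 := pow_le_pow_left₀ (abs_nonneg _) hy'.le 2
          rw [hvdef]
          simp only [Function.comp_apply, hψdef, this, mul_zero]
        have hz : fderiv ℝ v x = 0 := by
          rw [hev.fderiv_eq]
          exact fderiv_const_apply 0
        rw [hz]
        simp [ENNReal.zero_rpow_of_pos hq0]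
    have hWB : ∫⁻ x in Eset, (ENNReal.ofReal (g x)) ^ q ∂volume
        ≤ CW * (A ^ q * (volume Eset) ^ (1 - q/p)) :=
      weak_int_bound volume g hgmeas hq0 hqp hEm A hA
    have GRAD : eLpNorm (fderiv ℝ v) (qn : ℝ≥0∞) volume
        ≤ ENNReal.ofReal K * (CW ^ (1/q) * (A * (distFun volume u (l/2)) ^ γ)) := by
      rw [eLpNorm_eq_lintegral_rpow_enorm_toReal hqn0 hqntop, hqntor]
      have h1 : ∫⁻ x, (‖fderiv ℝ v x‖₊ : ℝ≥0∞) ^ q ∂volume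
          ≤ (ENNReal.ofReal K) ^ q * ∫⁻ x in Eset, (ENNReal.ofReal (g x)) ^ q ∂volume := by
        calc ∫⁻ x, (‖fderiv ℝ v x‖₊ : ℝ≥0∞) ^ q ∂volume
            ≤ ∫⁻ x, (ENNReal.ofReal K) ^ q
                * Eset.indicator (fun y => (ENNReal.ofReal (g y)) ^ q) x ∂volume :=
              lintegral_mono hpt
          _ = (ENNReal.ofReal K) ^ q
                * ∫⁻ x, Eset.indicator (fun y => (ENNReal.ofReal (g y)) ^ q) x ∂volume :=
              lintegral_const_mul' _ _
                (ENNReal.rpow_ne_top_of_nonneg hq0.le ENNReal.ofReal_ne_top)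
          _ = (ENNReal.ofReal K) ^ q * ∫⁻ x in Eset, (ENNReal.ofReal (g x)) ^ q ∂volume := by
              rw [lintegral_indicator hEm]
      have hμE : volume Eset = distFun volume u (l/2) := rfl
      have h2 : ∫⁻ x, (‖fderiv ℝ v x‖₊ : ℝ≥0∞) ^ q ∂volume
          ≤ (ENNReal.ofReal K) ^ q * (CW * (A ^ q * (distFun volume u (l/2)) ^ (1 - q/p))) := by
        refine le_trans h1 ?_
        rw [← hμE]
        exact mul_le_mul_right hWB _
      calc (∫⁻ x, (‖fderiv ℝ v x‖₊ : ℝ≥0∞) ^ q ∂volume) ^ (1/q)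
          ≤ ((ENNReal.ofReal K) ^ q
              * (CW * (A ^ q * (distFun volume u (l/2)) ^ (1 - q/p)))) ^ (1/q) :=
            ENNReal.rpow_le_rpow h2 (by positivity)
        _ = ENNReal.ofReal K * (CW ^ (1/q) * (A * (distFun volume u (l/2)) ^ γ)) := by
            rw [ENNReal.mul_rpow_of_nonneg _ _ (by positivity),
              ENNReal.mul_rpow_of_nonneg _ _ (by positivity),
              ENNReal.mul_rpow_of_nonneg _ _ (by positivity),
              one_div, ENNReal.rpow_rpow_inv hq0.ne', ENNReal.rpow_rpow_inv hq0.ne',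
              ← ENNReal.rpow_mul,
              show (1 - q/p) * q⁻¹ = γ from by
                rw [hγdef]; field_simp]
    calc ENNReal.ofReal l * (distFun volume u (Real.sqrt 2 * l)) ^ (1/q')
        ≤ eLpNorm v (q'n : ℝ≥0∞) volume := CHEB
      _ ≤ (CS : ℝ≥0∞) * eLpNorm (fderiv ℝ v) (qn : ℝ≥0∞) volume := SOB
      _ ≤ (CS : ℝ≥0∞) * (ENNReal.ofReal K * (CW ^ (1/q) * (A * (distFun volume u (l/2)) ^ γ))) :=
          mul_le_mul_right GRAD _
      _ = D * (A * (distFun volume u (l/2)) ^ γ) := by rw [hDdef]; ring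
  have key2 : ∀ s : ℝ, 0 < s →
      ENNReal.ofReal s * (distFun volume u s) ^ (1/ps) ≤ G * A ^ β * M ^ (1-β) := by
    intro s hs
    have hsq2 : (0:ℝ) < Real.sqrt 2 := Real.sqrt_pos.mpr (by norm_num)
    set l : ℝ := s / Real.sqrt 2 with hldef
    have hl : 0 < l := by positivity
    have hsl : s = Real.sqrt 2 * l := by
      rw [hldef]; field_simp
    set w : ℝ≥0∞ := ENNReal.ofReal l with hwdef
    have w0 : w ≠ 0 := by simp [hwdef, hl]
    have wtop : w ≠ ⊤ := ENNReal.ofReal_ne_top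
    have hwh : ENNReal.ofReal (l/2) = w / 2 := by
      rw [hwdef, ENNReal.ofReal_div_of_pos (by norm_num), ENNReal.ofReal_ofNat]
    have hwh0 : w / 2 ≠ 0 := by
      simp only [ne_eq, ENNReal.div_eq_zero_iff]
      push_neg
      exact ⟨w0, by norm_num⟩
    have hwhtop : w / 2 ≠ ⊤ := by
      simp only [ne_eq, ENNReal.div_eq_top]
      push_neg
      exact ⟨fun _ => by norm_num, fun h => absurd h wtop⟩
    set F2 : ℝ≥0∞ := distFun volume u (Real.sqrt 2 * l) with hF2def
    set Fh : ℝ≥0∞ := distFun volume u (l/2) with hFhdef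
    -- weak norm bound for u at level l/2
    have hw : w / 2 * Fh ^ (1/ps) ≤ M := by
      rw [← hwh, hMdef, weakNorm]
      exact le_iSup (fun t : Ioi (0:ℝ) =>
        ENNReal.ofReal t.1 * distFun volume u t.1 ^ (1/ps)) ⟨l/2, mem_Ioi.mpr (by positivity)⟩
    have h2 : Fh ^ (1/ps) ≤ M * (w/2)⁻¹ := by
      calc Fh ^ (1/ps) = (w/2)⁻¹ * (w/2 * Fh ^ (1/ps)) := by
            rw [← mul_assoc, ENNReal.inv_mul_cancel hwh0 hwhtop, one_mul]
        _ ≤ (w/2)⁻¹ * M := mul_le_mul_right hw _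
        _ = M * (w/2)⁻¹ := mul_comm _ _
    have h3 : Fh ≤ (M * (w/2)⁻¹) ^ ps := by
      calc Fh = (Fh ^ (1/ps)) ^ ps := by
            rw [← ENNReal.rpow_mul, one_div, inv_mul_cancel₀ hps0.ne', ENNReal.rpow_one]
        _ ≤ (M * (w/2)⁻¹) ^ ps := ENNReal.rpow_le_rpow h2 hps0.le
    have h4 : Fh ^ γ ≤ M ^ α * ((w/2) ^ α)⁻¹ := by
      calc Fh ^ γ ≤ ((M * (w/2)⁻¹) ^ ps) ^ γ := ENNReal.rpow_le_rpow h3 hγ0.le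
        _ = (M * (w/2)⁻¹) ^ α := by rw [← ENNReal.rpow_mul, hαdef]
        _ = M ^ α * ((w/2) ^ α)⁻¹ := by
            rw [ENNReal.mul_rpow_of_nonneg _ _ hα0.le, ENNReal.inv_rpow]
    set Z : ℝ≥0∞ := D * (A * (M ^ α * ((w/2) ^ α)⁻¹)) with hZdef
    have h5 : w * F2 ^ (1/q') ≤ Z := by
      refine le_trans (key1 l hl) ?_
      rw [hZdef]
      exact mul_le_mul_right (mul_le_mul_right h4 _) _
    have h6 : F2 ^ (1/q') ≤ w⁻¹ * Z := by
      calc F2 ^ (1/q') = w⁻¹ * (w * F2 ^ (1/q')) := by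
            rw [← mul_assoc, ENNReal.inv_mul_cancel w0 wtop, one_mul]
        _ ≤ w⁻¹ * Z := mul_le_mul_right h5 _
    have h7 : F2 ^ (1/ps) ≤ (w⁻¹ * Z) ^ β := by
      calc F2 ^ (1/ps) = (F2 ^ (1/q')) ^ β := by rw [← ENNReal.rpow_mul, hq's]
        _ ≤ (w⁻¹ * Z) ^ β := ENNReal.rpow_le_rpow h6 hβ0.le
    -- expand (w⁻¹ * Z) ^ β
    have hexp : (w⁻¹ * Z) ^ β
        = (w ^ β)⁻¹ * (D ^ β * (A ^ β * (M ^ (1-β) * ((w/2) ^ (1-β))⁻¹))) := by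
      rw [hZdef]
      simp only [ENNReal.mul_rpow_of_nonneg _ _ hβ0.le, ENNReal.inv_rpow,
        ← ENNReal.rpow_mul, hαβ]
    -- constant identity
    have hβ1' : (0:ℝ) ≤ 1 - β := by linarith
    have hw2 : ((w/2) ^ (1-β))⁻¹ = (w ^ (1-β))⁻¹ * (2:ℝ≥0∞) ^ (1-β) := by
      rw [ENNReal.div_rpow_of_nonneg _ _ hβ1', div_eq_mul_inv,
        ENNReal.mul_inv (Or.inl (by simp [ENNReal.rpow_eq_zero_iff, w0, wtop]))
          (Or.inl (ENNReal.rpow_ne_top_of_nonneg hβ1' wtop)), inv_inv]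
    have hww : w ^ β * w ^ (1-β) = w := by
      rw [← ENNReal.rpow_add _ _ w0 wtop]
      norm_num
    have hconst : w * ((w ^ β)⁻¹ * (w ^ (1-β))⁻¹) = 1 := by
      rw [← ENNReal.mul_inv (Or.inl (by simp [ENNReal.rpow_eq_zero_iff, w0, wtop]))
        (Or.inl (ENNReal.rpow_ne_top_of_nonneg hβ0.le wtop)), hww]
      exact ENNReal.mul_inv_cancel w0 wtop
    have hG2 : G = ENNReal.ofReal (Real.sqrt 2) * (2:ℝ≥0∞) ^ (1-β) * D ^ β := by
      rw [hGdef, hαβ]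
    have hF2s : distFun volume u s = F2 := by rw [hF2def, ← hsl]
    rw [hF2s]
    calc ENNReal.ofReal s * F2 ^ (1/ps)
        = ENNReal.ofReal (Real.sqrt 2) * w * F2 ^ (1/ps) := by
          rw [hsl, ENNReal.ofReal_mul hsq2.le, hwdef]
      _ ≤ ENNReal.ofReal (Real.sqrt 2) * w * ((w⁻¹ * Z) ^ β) :=
          mul_le_mul_right h7 _
      _ = ENNReal.ofReal (Real.sqrt 2) * w
            * ((w ^ β)⁻¹ * (D ^ β * (A ^ β * (M ^ (1-β) * ((w ^ (1-β))⁻¹ * (2:ℝ≥0∞) ^ (1-β)))))) := by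
          rw [hexp, hw2]
      _ = (ENNReal.ofReal (Real.sqrt 2) * (2:ℝ≥0∞) ^ (1-β) * D ^ β) * A ^ β * M ^ (1-β)
            * (w * ((w ^ β)⁻¹ * (w ^ (1-β))⁻¹)) := by ring
      _ = G * A ^ β * M ^ (1-β) := by rw [hconst, hG2, mul_one]
  -- absorption
  have hkey : M ≤ G * A ^ β * M ^ (1-β) := by
    rw [hMdef, weakNorm]
    exact iSup_le fun s => key2 s.1 s.2
  by_cases hM0 : M = 0
  · rw [hM0]; exact zero_le
  have hM1 : M ^ (1-β) ≠ 0 := by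
    simp [ENNReal.rpow_eq_zero_iff, hM0, hMtop]
  have hM2 : M ^ (1-β) ≠ ⊤ := ENNReal.rpow_ne_top_of_nonneg (by linarith) hMtop
  have hMβ : M ^ β ≤ G * A ^ β := by
    rw [← ENNReal.mul_le_mul_iff_left hM1 hM2, ← ENNReal.rpow_add _ _ hM0 hMtop]
    calc M ^ (β + (1-β)) = M := by norm_num
      _ ≤ G * A ^ β * M ^ (1-β) := hkey
  calc M = (M ^ β) ^ (1/β) := by
        rw [one_div, ENNReal.rpow_rpow_inv hβ0.ne']
    _ ≤ (G * A ^ β) ^ (1/β) := ENNReal.rpow_le_rpow hMβ (by positivity)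
    _ = G ^ (1/β) * A := by
        rw [ENNReal.mul_rpow_of_nonneg _ _ (by positivity), one_div,
          ENNReal.rpow_rpow_inv hβ0.ne']
    _ ≤ ENNReal.ofReal (max 1 ((G ^ (1/β)).toReal)) * A := by
        refine mul_le_mul_left ?_ _
        conv_lhs => rw [← ENNReal.ofReal_toReal hGβtop]
        exact ENNReal.ofReal_le_ofReal (le_max_right _ _)
end

section
/- Let n ≥ 3, let s ≥ n, and let θ > s. Then there is a constant C > 0, depending only on n, s, θ, such that for every measurable function f on ℝⁿ with ‖f‖_{L^{s,∞}(ℝⁿ)} < ∞ and every u ∈ C_c^∞(ℝⁿ), the following holds: ∫_{ℝⁿ} |f(x)| |u(x)|^{θ-1} dx ≤ C ‖f‖_{L^{s,∞}} ‖u‖_{L^{θ,∞}}^{(θ-1)/2 + (θs + ns - θn - s)/(2s)} ‖∇(|u|^{θ/2})‖_{L²}^{n(θ-s)/(θs)}. -/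
open MeasureTheory ENNReal Set

open Filter
open scoped NNReal

lemma wwe_hasDerivAt_absRpow {p : ℝ} (hp : 1 < p) (t : ℝ) :
    HasDerivAt (fun x : ℝ => |x| ^ p) (p * t * |t| ^ (p - 2)) t := by
  rcases lt_trichotomy t 0 with ht | rfl | ht
  · have h1 : HasDerivAt (fun x : ℝ => (-x) ^ p) ((p * (-t) ^ (p - 1)) * (-1)) t :=
      (Real.hasDerivAt_rpow_const (p := p) (Or.inl (neg_pos.2 ht).ne')).comp t (hasDerivAt_neg t)
    have h2 : (fun x : ℝ => (-x) ^ p) =ᶠ[nhds t] fun x : ℝ => |x| ^ p := by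
      filter_upwards [eventually_lt_nhds ht] with x hx
      rw [abs_of_neg hx]
    have h3 : (p * (-t) ^ (p - 1)) * (-1) = p * t * |t| ^ (p - 2) := by
      rw [abs_of_neg ht, show p - 1 = (p - 2) + 1 by ring,
        Real.rpow_add (neg_pos.2 ht), Real.rpow_one]
      ring
    exact h3 ▸ h1.congr_of_eventuallyEq h2.symm
  · have hslope : Tendsto (fun x : ℝ => |x| ^ (p - 1)) (nhds 0) (nhds 0) := by
      have hc : ContinuousAt (fun y : ℝ => y ^ (p - 1)) 0 :=
        Real.continuousAt_rpow_const 0 (p - 1) (Or.inr (by linarith))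
      have h0 : (0 : ℝ) ^ (p - 1) = 0 := Real.zero_rpow (by linarith)
      have := hc.tendsto.comp (continuous_abs.tendsto' 0 0 abs_zero)
      rwa [h0] at this
    rw [hasDerivAt_iff_tendsto_slope]
    have hb : ∀ᶠ x in nhdsWithin 0 {(0:ℝ)}ᶜ,
        ‖slope (fun x : ℝ => |x| ^ p) 0 x‖ ≤ |x| ^ (p - 1) := by
      filter_upwards [eventually_mem_nhdsWithin] with x (hx : x ≠ 0)
      have hxa : (0:ℝ) < |x| := abs_pos.2 hx
      rw [slope_def_field]
      rw [div_eq_mul_inv, abs_zero, Real.zero_rpow (by linarith : p ≠ 0), sub_zero, sub_zero]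
      rw [norm_mul, norm_inv, Real.norm_eq_abs, Real.norm_eq_abs,
        abs_of_nonneg (Real.rpow_nonneg (abs_nonneg x) p),
        Real.rpow_sub hxa, Real.rpow_one, div_eq_mul_inv]
    have h0 : p * (0:ℝ) * |(0:ℝ)| ^ (p - 2) = 0 := by ring
    rw [h0]
    exact squeeze_zero_norm' hb (hslope.mono_left nhdsWithin_le_nhds)
  · have h1 : HasDerivAt (fun x : ℝ => x ^ p) (p * t ^ (p - 1)) t :=
      Real.hasDerivAt_rpow_const (Or.inl ht.ne')
    have h2 : (fun x : ℝ => x ^ p) =ᶠ[nhds t] fun x : ℝ => |x| ^ p := by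
      filter_upwards [eventually_gt_nhds ht] with x hx
      rw [abs_of_pos hx]
    have h3 : p * t ^ (p - 1) = p * t * |t| ^ (p - 2) := by
      rw [abs_of_pos ht, show p - 1 = (p - 2) + 1 by ring, Real.rpow_add ht, Real.rpow_one]
      ring
    exact h3 ▸ h1.congr_of_eventuallyEq h2.symm

lemma wwe_contDiff_absRpow {p : ℝ} (hp : 1 < p) : ContDiff ℝ 1 (fun x : ℝ => |x| ^ p) := by
  have hcont : Continuous (fun t : ℝ => p * t * |t| ^ (p - 2)) := by
    rw [continuous_iff_continuousAt]
    intro t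
    rcases eq_or_ne t 0 with rfl | ht
    · have hslope : Tendsto (fun x : ℝ => p * |x| ^ (p - 1)) (nhds 0) (nhds 0) := by
        have hc : ContinuousAt (fun y : ℝ => y ^ (p - 1)) 0 :=
          Real.continuousAt_rpow_const 0 (p - 1) (Or.inr (by linarith))
        have h0 : (0 : ℝ) ^ (p - 1) = 0 := Real.zero_rpow (by linarith)
        have h := (hc.tendsto.comp (continuous_abs.tendsto' 0 0 abs_zero)).const_mul p
        rw [h0, mul_zero] at h
        exact h
      have hb : ∀ x : ℝ, ‖p * x * |x| ^ (p - 2)‖ ≤ p * |x| ^ (p - 1) := by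
        intro x
        rcases eq_or_ne x 0 with rfl | hx
        · simp [Real.zero_rpow (show p - 1 ≠ 0 by linarith)]
        · have hxa : (0:ℝ) < |x| := abs_pos.2 hx
          rw [norm_mul, norm_mul, Real.norm_eq_abs, Real.norm_eq_abs, Real.norm_eq_abs,
            abs_of_nonneg (Real.rpow_nonneg (abs_nonneg x) _),
            abs_of_pos (lt_trans zero_lt_one hp),
            show p - 1 = 1 + (p - 2) by ring, Real.rpow_add hxa, Real.rpow_one, mul_assoc]
      have : Tendsto (fun t : ℝ => p * t * |t| ^ (p - 2)) (nhds 0) (nhds 0) :=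
        squeeze_zero_norm hb hslope
      have h00 : p * (0:ℝ) * |(0:ℝ)| ^ (p - 2) = 0 := by ring
      have : Tendsto (fun t : ℝ => p * t * |t| ^ (p - 2)) (nhds 0)
          (nhds ((fun t : ℝ => p * t * |t| ^ (p - 2)) 0)) := by
        simpa only [h00] using this
      exact this
    · exact (continuousAt_const.mul continuousAt_id).mul
        ((Real.continuousAt_rpow_const _ _ (Or.inl (abs_ne_zero.2 ht))).comp
          continuous_abs.continuousAt)
  rw [contDiff_one_iff_deriv]
  refine ⟨fun t => (wwe_hasDerivAt_absRpow hp t).differentiableAt, ?_⟩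
  have : deriv (fun x : ℝ => |x| ^ p) = fun t => p * t * |t| ^ (p - 2) :=
    funext fun t => (wwe_hasDerivAt_absRpow hp t).deriv
  rw [this]
  exact hcont

lemma wwe_lintegral_Ioi_rpow {a T : ℝ} (ha : a < -1) (hT : 0 < T) :
    ∫⁻ t in Ioi T, ENNReal.ofReal (t ^ a) = ENNReal.ofReal (T ^ (a+1) / (-(a+1))) := by
  have hnn : 0 ≤ᵐ[volume.restrict (Ioi T)] fun t : ℝ => t ^ a := by
    filter_upwards [ae_restrict_mem measurableSet_Ioi] with x hx
    exact Real.rpow_nonneg (le_of_lt (hT.trans hx)) a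
  rw [← ofReal_integral_eq_lintegral_ofReal (integrableOn_Ioi_rpow_of_lt ha hT) hnn,
    integral_Ioi_rpow_of_lt ha hT]
  congr 1
  rw [div_neg, neg_div]

lemma wwe_lintegral_Ioc_rpow {a T : ℝ} (ha : -1 < a) (hT : 0 < T) :
    ∫⁻ t in Ioc 0 T, ENNReal.ofReal (t ^ a) = ENNReal.ofReal (T ^ (a+1) / (a+1)) := by
  have hi : IntegrableOn (fun t : ℝ => t ^ a) (Ioc 0 T) volume :=
    (intervalIntegrable_iff_integrableOn_Ioc_of_le hT.le).mp
      (intervalIntegral.intervalIntegrable_rpow' ha)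
  have hnn : 0 ≤ᵐ[volume.restrict (Ioc (0:ℝ) T)] fun t : ℝ => t ^ a := by
    filter_upwards [ae_restrict_mem measurableSet_Ioc] with x hx
    exact Real.rpow_nonneg hx.1.le a
  rw [← ofReal_integral_eq_lintegral_ofReal hi hnn]
  congr 1
  rw [← intervalIntegral.integral_of_le hT.le, integral_rpow (Or.inl ha),
    Real.zero_rpow (by linarith : a + 1 ≠ 0)]
  ring

lemma wwe_min_split {s : ℝ} (hs : 1 < s) (D : ℝ → ℝ≥0∞) (K M : ℝ≥0∞)
    (hD : ∀ t : ℝ, 0 < t → D t ≤ K ^ s * (ENNReal.ofReal t) ^ (-s)) :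
    ∫⁻ t in Ioi (0:ℝ), min (D t) M ≤ ENNReal.ofReal (s/(s-1)) * K * M ^ (1 - 1/s) := by
  have hs0 : (0:ℝ) < s := by linarith
  rcases eq_or_ne K 0 with rfl | hK0
  · have : ∫⁻ t in Ioi (0:ℝ), min (D t) M ≤ ∫⁻ _ in Ioi (0:ℝ), (0:ℝ≥0∞) := by
      apply setLIntegral_mono' measurableSet_Ioi
      intro t ht
      have h := hD t ht
      rw [ENNReal.zero_rpow_of_pos hs0, zero_mul] at h
      exact le_trans (min_le_left _ _) h
    simpa using this.trans_eq lintegral_zero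
  rcases eq_or_ne M 0 with rfl | hM0
  · have : ∫⁻ t in Ioi (0:ℝ), min (D t) 0 ≤ ∫⁻ _ in Ioi (0:ℝ), (0:ℝ≥0∞) := by
      apply setLIntegral_mono' measurableSet_Ioi
      intro t _
      exact min_le_right _ _
    simpa using this.trans_eq lintegral_zero
  have hs1 : (0:ℝ) < s - 1 := by linarith
  have hc0 : ENNReal.ofReal (s/(s-1)) ≠ 0 :=
    (ENNReal.ofReal_pos.2 (div_pos hs0 hs1)).ne'
  have he : (0:ℝ) < 1 - 1/s := by
    rw [sub_pos, div_lt_one hs0]; exact hs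
  rcases eq_or_ne K ∞ with rfl | hKt
  · refine le_top.trans_eq ?_
    rw [ENNReal.mul_top hc0, ENNReal.top_mul]
    rw [Ne, ENNReal.rpow_eq_zero_iff]
    push_neg
    exact ⟨fun h => absurd h hM0, fun _ => by linarith⟩
  rcases eq_or_ne M ∞ with rfl | hMt
  · refine le_top.trans_eq ?_
    rw [ENNReal.top_rpow_of_pos he, ENNReal.mul_top]
    exact mul_ne_zero hc0 hK0
  -- main case
  set k := K.toReal with hk
  set m := M.toReal with hm
  have hkpos : 0 < k := ENNReal.toReal_pos hK0 hKt
  have hmpos : 0 < m := ENNReal.toReal_pos hM0 hMt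
  set T : ℝ := k * m ^ (-(1/s)) with hT
  have hTpos : 0 < T := mul_pos hkpos (Real.rpow_pos_of_pos hmpos _)
  have hKr : K = ENNReal.ofReal k := (ENNReal.ofReal_toReal hKt).symm
  have hMr : M = ENNReal.ofReal m := (ENNReal.ofReal_toReal hMt).symm
  have hsplit : Ioi (0:ℝ) = Ioc 0 T ∪ Ioi T := (Ioc_union_Ioi_eq_Ioi hTpos.le).symm
  calc ∫⁻ t in Ioi (0:ℝ), min (D t) M
      ≤ (∫⁻ t in Ioc (0:ℝ) T, min (D t) M) + ∫⁻ t in Ioi T, min (D t) M := by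
        rw [hsplit]; exact lintegral_union_le _ _ _
    _ ≤ (∫⁻ _ in Ioc (0:ℝ) T, M) + ∫⁻ t in Ioi T, ENNReal.ofReal (k ^ s) *
          ENNReal.ofReal (t ^ (-s)) := by
        refine add_le_add (setLIntegral_mono' measurableSet_Ioc fun t _ => min_le_right _ _)
          (setLIntegral_mono' measurableSet_Ioi fun t ht => ?_)
        refine le_trans (min_le_left _ _) (le_trans (hD t (hTpos.trans ht)) ?_)
        rw [hKr, ENNReal.ofReal_rpow_of_pos hkpos, ENNReal.ofReal_rpow_of_pos (hTpos.trans ht)]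
    _ = M * ENNReal.ofReal T + ENNReal.ofReal (k ^ s) *
          ENNReal.ofReal (T ^ (-s+1) / (-(-s+1))) := by
        rw [setLIntegral_const, lintegral_const_mul' _ _ ENNReal.ofReal_ne_top,
          wwe_lintegral_Ioi_rpow (by linarith) hTpos, Real.volume_Ioc, sub_zero]
    _ ≤ ENNReal.ofReal (s/(s-1)) * K * M ^ (1 - 1/s) := by
        have hds : (0:ℝ) ≤ T ^ (-s+1) / (-(-s+1)) :=
          div_nonneg (Real.rpow_nonneg hTpos.le _) (by linarith)
        rw [hKr, hMr, ENNReal.ofReal_rpow_of_pos hmpos, ← ENNReal.ofReal_mul hmpos.le,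
          ← ENNReal.ofReal_mul (Real.rpow_nonneg hkpos.le s),
          ← ENNReal.ofReal_add (mul_nonneg hmpos.le hTpos.le)
            (mul_nonneg (Real.rpow_nonneg hkpos.le s) hds),
          ← ENNReal.ofReal_mul (div_nonneg hs0.le hs1.le),
          ← ENNReal.ofReal_mul (mul_nonneg (div_nonneg hs0.le hs1.le) hkpos.le)]
        apply ENNReal.ofReal_le_ofReal
        have e1 : m * T = k * m ^ (1 - 1/s) := by
          rw [hT, show (1 - 1/s : ℝ) = 1 + (-(1/s)) by ring, Real.rpow_add hmpos,
            Real.rpow_one]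
          ring
        have e2 : k ^ s * (T ^ (-s+1) / (-(-s+1))) = (1/(s-1)) * (k * m ^ (1 - 1/s)) := by
          rw [hT, Real.mul_rpow hkpos.le (Real.rpow_pos_of_pos hmpos _).le,
            ← Real.rpow_mul hmpos.le,
            show (-(1/s)) * (-s+1) = 1 - 1/s by field_simp; ring]
          have hkk : k ^ s * k ^ (-s+1) = k := by
            rw [← Real.rpow_add hkpos]; norm_num
          rw [show (-(-s+1):ℝ) = s - 1 by ring]
          linear_combination (m ^ (1 - 1/s) / (s-1)) * hkk
        rw [e1, e2, show s/(s-1) = 1 + 1/(s-1) by field_simp; ring]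
        exact le_of_eq (by ring)

lemma wwe_min_split2 {α β : ℝ} (hα : 0 < α) (hα1 : α < 1) (hβ : 1 < β) (A B : ℝ≥0∞) :
    ∫⁻ τ in Ioi (0:ℝ), min (A * (ENNReal.ofReal τ) ^ (-α)) (B * (ENNReal.ofReal τ) ^ (-β)) ≤
      ENNReal.ofReal (1/(1-α) + 1/(β-1)) *
        (A ^ ((β-1)/(β-α)) * B ^ ((1-α)/(β-α))) := by
  have hx : (0:ℝ) < β - α := by linarith
  have hp : (0:ℝ) < (β-1)/(β-α) := div_pos (by linarith) hx
  have hq : (0:ℝ) < (1-α)/(β-α) := div_pos (by linarith) hx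
  have hc0 : ENNReal.ofReal (1/(1-α) + 1/(β-1)) ≠ 0 :=
    (ENNReal.ofReal_pos.2 (add_pos (div_pos one_pos (by linarith))
      (div_pos one_pos (by linarith)))).ne'
  rcases eq_or_ne A 0 with rfl | hA0
  · have : ∫⁻ τ in Ioi (0:ℝ), min ((0:ℝ≥0∞) * (ENNReal.ofReal τ) ^ (-α))
        (B * (ENNReal.ofReal τ) ^ (-β)) ≤ ∫⁻ _ in Ioi (0:ℝ), (0:ℝ≥0∞) := by
      apply setLIntegral_mono' measurableSet_Ioi
      intro τ _
      rw [zero_mul]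
      exact min_le_left _ _
    simpa using this.trans_eq lintegral_zero
  rcases eq_or_ne B 0 with rfl | hB0
  · have : ∫⁻ τ in Ioi (0:ℝ), min (A * (ENNReal.ofReal τ) ^ (-α))
        ((0:ℝ≥0∞) * (ENNReal.ofReal τ) ^ (-β)) ≤ ∫⁻ _ in Ioi (0:ℝ), (0:ℝ≥0∞) := by
      apply setLIntegral_mono' measurableSet_Ioi
      intro τ _
      rw [zero_mul]
      exact min_le_right _ _
    simpa using this.trans_eq lintegral_zero
  rcases eq_or_ne A ∞ with rfl | hAt
  · refine le_top.trans_eq ?_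
    rw [ENNReal.top_rpow_of_pos hp, ENNReal.top_mul, ENNReal.mul_top hc0]
    rw [Ne, ENNReal.rpow_eq_zero_iff]
    push_neg
    exact ⟨fun h => absurd h hB0, fun _ => by linarith [hq]⟩
  rcases eq_or_ne B ∞ with rfl | hBt
  · refine le_top.trans_eq ?_
    rw [ENNReal.top_rpow_of_pos hq, ENNReal.mul_top
      (by rw [Ne, ENNReal.rpow_eq_zero_iff]; push_neg;
          exact ⟨fun h => absurd h hA0, fun _ => by linarith [hp]⟩),
      ENNReal.mul_top hc0]
  -- main case
  set a := A.toReal with hadef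
  set b := B.toReal with hbdef
  have ha : 0 < a := ENNReal.toReal_pos hA0 hAt
  have hb : 0 < b := ENNReal.toReal_pos hB0 hBt
  have hAr : A = ENNReal.ofReal a := (ENNReal.ofReal_toReal hAt).symm
  have hBr : B = ENNReal.ofReal b := (ENNReal.ofReal_toReal hBt).symm
  set T : ℝ := (b/a) ^ (1/(β-α)) with hTdef
  have hTpos : 0 < T := Real.rpow_pos_of_pos (div_pos hb ha) _
  set p := (β-1)/(β-α) with hpdef
  set q := (1-α)/(β-α) with hqdef
  have e1 : a * T ^ (1-α) = a ^ p * b ^ q := by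
    have hTq : T ^ (1-α) = b ^ q / a ^ q := by
      rw [hTdef, ← Real.rpow_mul (div_pos hb ha).le,
        show 1/(β-α) * (1-α) = q by rw [hqdef]; ring,
        Real.div_rpow hb.le ha.le]
    rw [hTq]
    calc a * (b ^ q / a ^ q) = (a ^ (1:ℝ) * a ^ (-q)) * b ^ q := by
          rw [Real.rpow_one, Real.rpow_neg ha.le, div_eq_mul_inv]; ring
      _ = a ^ p * b ^ q := by
          rw [← Real.rpow_add ha,
            show (1:ℝ) + -q = p by rw [hpdef, hqdef]; field_simp; ring]
  have e2 : b * T ^ (1-β) = a ^ p * b ^ q := by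
    have hTr : T ^ (1-β) = b ^ (-p) / a ^ (-p) := by
      rw [hTdef, ← Real.rpow_mul (div_pos hb ha).le,
        show 1/(β-α) * (1-β) = -p by rw [hpdef]; ring,
        Real.div_rpow hb.le ha.le]
    rw [hTr]
    calc b * (b ^ (-p) / a ^ (-p)) = (b ^ (1:ℝ) * b ^ (-p)) * (a ^ (-p))⁻¹ := by
          rw [Real.rpow_one, div_eq_mul_inv]; ring
      _ = a ^ p * b ^ q := by
          rw [← Real.rpow_add hb,
            show (1:ℝ) + -p = q by rw [hpdef, hqdef]; field_simp; ring,
            ← Real.rpow_neg ha.le, neg_neg]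
          ring
  have hsplit : Ioi (0:ℝ) = Ioc 0 T ∪ Ioi T := (Ioc_union_Ioi_eq_Ioi hTpos.le).symm
  calc ∫⁻ τ in Ioi (0:ℝ), min (A * (ENNReal.ofReal τ) ^ (-α)) (B * (ENNReal.ofReal τ) ^ (-β))
      ≤ (∫⁻ τ in Ioc (0:ℝ) T, min (A * (ENNReal.ofReal τ) ^ (-α))
          (B * (ENNReal.ofReal τ) ^ (-β))) +
        ∫⁻ τ in Ioi T, min (A * (ENNReal.ofReal τ) ^ (-α))
          (B * (ENNReal.ofReal τ) ^ (-β)) := by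
        rw [hsplit]; exact lintegral_union_le _ _ _
    _ ≤ (∫⁻ τ in Ioc (0:ℝ) T, ENNReal.ofReal a * ENNReal.ofReal (τ ^ (-α))) +
        ∫⁻ τ in Ioi T, ENNReal.ofReal b * ENNReal.ofReal (τ ^ (-β)) := by
        refine add_le_add (setLIntegral_mono' measurableSet_Ioc fun τ hτ => ?_)
          (setLIntegral_mono' measurableSet_Ioi fun τ hτ => ?_)
        · refine le_trans (min_le_left _ _) (le_of_eq ?_)
          rw [hAr, ENNReal.ofReal_rpow_of_pos hτ.1]
        · refine le_trans (min_le_right _ _) (le_of_eq ?_)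
          rw [hBr, ENNReal.ofReal_rpow_of_pos (hTpos.trans hτ)]
    _ = ENNReal.ofReal a * ENNReal.ofReal (T ^ (-α+1) / (-α+1)) +
        ENNReal.ofReal b * ENNReal.ofReal (T ^ (-β+1) / (-(-β+1))) := by
        rw [lintegral_const_mul' _ _ ENNReal.ofReal_ne_top,
          lintegral_const_mul' _ _ ENNReal.ofReal_ne_top,
          wwe_lintegral_Ioc_rpow (by linarith) hTpos,
          wwe_lintegral_Ioi_rpow (by linarith) hTpos]
    _ ≤ ENNReal.ofReal (1/(1-α) + 1/(β-1)) * (A ^ p * B ^ q) := by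
        have hd1 : (0:ℝ) ≤ T ^ (-α+1) / (-α+1) :=
          div_nonneg (Real.rpow_nonneg hTpos.le _) (by linarith)
        have hd2 : (0:ℝ) ≤ T ^ (-β+1) / (-(-β+1)) :=
          div_nonneg (Real.rpow_nonneg hTpos.le _) (by linarith)
        rw [hAr, hBr, ENNReal.ofReal_rpow_of_pos ha, ENNReal.ofReal_rpow_of_pos hb,
          ← ENNReal.ofReal_mul ha.le, ← ENNReal.ofReal_mul hb.le,
          ← ENNReal.ofReal_add (mul_nonneg ha.le hd1) (mul_nonneg hb.le hd2),
          ← ENNReal.ofReal_mul (Real.rpow_nonneg ha.le p),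
          ← ENNReal.ofReal_mul (add_nonneg (div_nonneg zero_le_one (by linarith))
            (div_nonneg zero_le_one (by linarith)))]
        apply ENNReal.ofReal_le_ofReal
        rw [show (-α+1:ℝ) = 1-α by ring, show (-β+1:ℝ) = 1-β by ring,
          show (-(1-β):ℝ) = β-1 by ring]
        calc a * (T ^ (1-α) / (1-α)) + b * (T ^ (1-β) / (β-1))
            = (a ^ p * b ^ q) / (1-α) + (a ^ p * b ^ q) / (β-1) := by
              rw [mul_div_assoc', mul_div_assoc', e1, e2]
          _ ≤ (1/(1-α) + 1/(β-1)) * (a ^ p * b ^ q) := by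
              apply le_of_eq
              have h1 : (1-α:ℝ) ≠ 0 := by linarith
              have h2 : (β-1:ℝ) ≠ 0 := by linarith
              field_simp

lemma wwe_distFun_le {α : Type*} [MeasurableSpace α] (μ : Measure α) (f : α → ℝ)
    {p : ℝ} (hp : 0 < p) {t : ℝ} (ht : 0 < t) :
    distFun μ f t ≤ (weakNorm μ f p) ^ p * (ENNReal.ofReal t) ^ (-p) := by
  have h1 : ENNReal.ofReal t * distFun μ f t ^ (1/p) ≤ weakNorm μ f p :=
    le_iSup (fun s : Ioi (0:ℝ) => ENNReal.ofReal s.1 * distFun μ f s.1 ^ (1/p)) ⟨t, ht⟩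
  have h2 := ENNReal.rpow_le_rpow h1 hp.le
  rw [ENNReal.mul_rpow_of_nonneg _ _ hp.le, ← ENNReal.rpow_mul, one_div,
    inv_mul_cancel₀ hp.ne', ENNReal.rpow_one] at h2
  have hb0 : (ENNReal.ofReal t) ^ p ≠ 0 :=
    (ENNReal.rpow_pos (ENNReal.ofReal_pos.2 ht) ENNReal.ofReal_ne_top).ne'
  have hbt : (ENNReal.ofReal t) ^ p ≠ ∞ :=
    ENNReal.rpow_ne_top_of_nonneg hp.le ENNReal.ofReal_ne_top
  rw [ENNReal.rpow_neg, ← div_eq_mul_inv,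
    ENNReal.le_div_iff_mul_le (Or.inl hb0) (Or.inl hbt), mul_comm]
  exact h2

lemma wwe_grad_norm {n : ℕ} (v : EuclideanSpace ℝ (Fin n) → ℝ) :
    eLpNorm (fun x => ‖gradient v x‖) 2 volume = eLpNorm (fderiv ℝ v) 2 volume := by
  rw [← eLpNorm_norm (fderiv ℝ v)]
  apply eLpNorm_congr_ae
  filter_upwards with x
  simp only [gradient, LinearIsometryEquiv.norm_map]

set_option maxHeartbeats 1000000 in
/-- For `n ≥ 3`, `s ≥ n`, `θ > s`, `f ∈ L^{s,∞}(ℝⁿ)` and `u ∈ C_c^∞(ℝⁿ)`: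
`∫ |f| |u|^{θ-1} ≤ C ‖f‖_{L^{s,∞}} ‖u‖_{L^{θ,∞}}^{(θ-1)/2 + (θs+ns-θn-s)/(2s)}
‖∇(|u|^{θ/2})‖_{L²}^{n(θ-s)/(θs)}`. -/
theorem weighted_weak_estimate
    (n : ℕ) (hn : 3 ≤ n) (s θ : ℝ) (hs : (n:ℝ) ≤ s) (hθ : s < θ) :
    ∃ C : ℝ, 0 < C ∧ ∀ f u : EuclideanSpace ℝ (Fin n) → ℝ,
      Measurable f → weakNorm volume f s ≠ ∞ →
      ContDiff ℝ (⊤ : ℕ∞) u → HasCompactSupport u →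
      (∫⁻ x, ENNReal.ofReal (|f x| * |u x| ^ (θ - 1)))
        ≤ ENNReal.ofReal C * weakNorm volume f s
          * weakNorm volume u θ
              ^ ((θ - 1)/2 + (θ*s + (n:ℝ)*s - θ*(n:ℝ) - s)/(2*s))
          * eLpNorm (fun x => ‖gradient (fun y => |u y| ^ (θ/2)) x‖) 2 volume
              ^ ((n:ℝ)*(θ - s)/(θ*s)) := by
  have hn3 : (3:ℝ) ≤ (n:ℝ) := by exact_mod_cast hn
  have hs1 : (1:ℝ) < s := by linarith
  have hs0 : (0:ℝ) < s := by linarith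
  have hθ1 : (1:ℝ) < θ := by linarith
  have hθ0 : (0:ℝ) < θ := by linarith
  have hn2 : (0:ℝ) < (n:ℝ) - 2 := by linarith
  have hn0 : (0:ℝ) < (n:ℝ) := by linarith
  set α : ℝ := θ*(s-1)/(s*(θ-1)) with hα_def
  set β : ℝ := θ*(n:ℝ)*(s-1)/(((n:ℝ)-2)*s*(θ-1)) with hβ_def
  have hα0 : 0 < α := div_pos (mul_pos hθ0 (by linarith)) (mul_pos hs0 (by linarith))
  have hα1 : α < 1 := by
    rw [hα_def, div_lt_one (mul_pos hs0 (by linarith))]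
    nlinarith
  have hβ1 : 1 < β := by
    rw [hβ_def, lt_div_iff₀ (mul_pos (mul_pos hn2 hs0) (by linarith))]
    nlinarith [mul_pos hθ0 (by linarith : (0:ℝ) < 2*s - n), mul_pos hs0 hn2]
  have hβα : α < β := by
    rw [hα_def, hβ_def, div_lt_div_iff₀ (mul_pos hs0 (by linarith))
      (mul_pos (mul_pos hn2 hs0) (by linarith))]
    nlinarith [mul_pos (mul_pos (mul_pos hθ0 (by linarith : (0:ℝ) < s - 1)) hs0)
      (by linarith : (0:ℝ) < θ - 1)]
  set qR : ℝ := 2*(n:ℝ)/((n:ℝ)-2) with hqR_def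
  have hqR0 : 0 < qR := div_pos (by linarith) hn2
  -- Sobolev constant
  set CS : NNReal :=
    eLpNormLESNormFDerivOfEqInnerConst (volume : Measure (EuclideanSpace ℝ (Fin n))) 2
    with hCS_def
  set cS : ℝ := (CS : ℝ) + 1 with hcS_def
  have hcS0 : 0 < cS := by positivity
  set e₁ : ℝ := (θ - 1)/2 + (θ*s + (n:ℝ)*s - θ*(n:ℝ) - s)/(2*s) with he₁_def
  set e₂ : ℝ := (n:ℝ)*(θ - s)/(θ*s) with he₂_def
  have he₂0 : 0 < e₂ := div_pos (mul_pos hn0 (by linarith)) (mul_pos hθ0 hs0)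
  refine ⟨(s/(s-1)) * ((1/(1-α) + 1/(β-1)) * cS ^ e₂),
    mul_pos (div_pos hs0 (by linarith)) (mul_pos (add_pos
      (div_pos one_pos (by linarith)) (div_pos one_pos (by linarith)))
      (Real.rpow_pos_of_pos hcS0 _)), ?_⟩
  intro f u hf hfK hu hsupp
  have h1s : (0:ℝ) ≤ 1 - 1/s := by
    rw [sub_nonneg, div_le_one hs0]; linarith
  have hsne : s ≠ 0 := hs0.ne'
  have hθm1 : θ - 1 ≠ 0 := by linarith
  have hnm2 : ((n:ℝ) - 2) ≠ 0 := hn2.ne'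
  have hθne : θ ≠ 0 := hθ0.ne'
  set K := weakNorm volume f s with hK_def
  set W := weakNorm volume u θ with hW_def
  set v : EuclideanSpace ℝ (Fin n) → ℝ := fun y => |u y| ^ (θ/2) with hv_def
  set G := eLpNorm (fun x => ‖gradient v x‖) 2 volume with hG_def
  set H : EuclideanSpace ℝ (Fin n) → ℝ := fun x => |u x| ^ (θ - 1) with hH_def
  have hHc : Continuous H :=
    (hu.continuous.abs).rpow_const (fun x => Or.inr (by linarith))
  have hHnn : ∀ x, 0 ≤ H x := fun x => Real.rpow_nonneg (abs_nonneg _) _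
  have hv1 : ContDiff ℝ 1 v :=
    (wwe_contDiff_absRpow (by linarith : (1:ℝ) < θ/2)).comp (hu.of_le (by simp))
  have hv2 : HasCompactSupport v :=
    hsupp.comp_left (g := fun t : ℝ => |t| ^ (θ/2))
      (by simp [Real.zero_rpow (by positivity : θ/2 ≠ 0)])
  -- Sobolev inequality
  set p' : ℝ≥0 := (2*(n:ℝ)/((n:ℝ)-2)).toNNReal with hp'_def
  have hp'c : (p' : ℝ) = qR := Real.coe_toNNReal _ (by positivity)
  have hp'0 : p' ≠ 0 := by
    rw [← NNReal.coe_ne_zero, hp'c]; exact hqR0.ne'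
  have hrank : Module.finrank ℝ (EuclideanSpace ℝ (Fin n)) = n :=
    finrank_euclideanSpace_fin
  have hsob : eLpNorm v p' volume ≤ (CS : ℝ≥0∞) * G := by
    have h2 : ((2:ℝ≥0) : ℝ≥0∞) = (2 : ℝ≥0∞) := by norm_num
    have hsob0 := eLpNorm_le_eLpNorm_fderiv_of_eq_inner (p := 2) (p' := p')
      (volume : Measure (EuclideanSpace ℝ (Fin n))) hv1 hv2 one_le_two
      (by rw [hrank]; omega) (by
        rw [hp'c, hqR_def, hrank]
        have h1 : ((n:ℝ) - 2) ≠ 0 := hn2.ne'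
        have h3 : (n:ℝ) ≠ 0 := hn0.ne'
        push_cast
        field_simp)
    rw [h2] at hsob0
    rw [hG_def, wwe_grad_norm]
    exact hsob0
  -- Chebyshev + Sobolev: distFun u r ≤ ((CS*G))^qR * r^{-(θ/2) qR}
  have hDu2 : ∀ r : ℝ, 0 < r → distFun volume u r ≤
      ((CS : ℝ≥0∞) * G) ^ qR * (ENNReal.ofReal r) ^ (-(θ/2) * qR) := by
    intro r hr
    have hsub : {x : EuclideanSpace ℝ (Fin n) | r < |u x|} ⊆
        {x | ENNReal.ofReal (r ^ (θ/2)) ≤ (‖v x‖₊ : ℝ≥0∞)} := by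
      intro x hx
      have h1 : r ^ (θ/2) ≤ |u x| ^ (θ/2) :=
        Real.rpow_le_rpow hr.le (le_of_lt hx) (by linarith)
      have h2 : ENNReal.ofReal (v x) = (‖v x‖₊ : ℝ≥0∞) := by
        rw [show (‖v x‖₊ : ℝ≥0∞) = ENNReal.ofReal ‖v x‖ from (ofReal_norm (v x)).symm, Real.norm_eq_abs,
          abs_of_nonneg (Real.rpow_nonneg (abs_nonneg _) _)]
      show ENNReal.ofReal (r ^ (θ/2)) ≤ (‖v x‖₊ : ℝ≥0∞)
      rw [← h2]
      exact ENNReal.ofReal_le_ofReal h1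
    have hε0 : ENNReal.ofReal (r ^ (θ/2)) ≠ 0 :=
      (ENNReal.ofReal_pos.2 (Real.rpow_pos_of_pos hr _)).ne'
    have hcheb := meas_ge_le_mul_pow_eLpNorm_enorm (volume) (p := (p' : ℝ≥0∞))
      (by exact_mod_cast hp'0) ENNReal.coe_ne_top
      hv1.continuous.aestronglyMeasurable hε0 (fun h => absurd h ENNReal.ofReal_ne_top)
    have htr : ((p' : ℝ≥0∞)).toReal = qR := by
      rw [ENNReal.coe_toReal, hp'c]
    calc distFun volume u r ≤ volume {x | ENNReal.ofReal (r ^ (θ/2)) ≤ (‖v x‖₊ : ℝ≥0∞)} :=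
          measure_mono hsub
      _ ≤ (ENNReal.ofReal (r ^ (θ/2)))⁻¹ ^ ((p' : ℝ≥0∞)).toReal *
            eLpNorm v p' volume ^ ((p' : ℝ≥0∞)).toReal := hcheb
      _ ≤ ((CS : ℝ≥0∞) * G) ^ qR * (ENNReal.ofReal r) ^ (-(θ/2) * qR) := by
          rw [htr, mul_comm]
          refine mul_le_mul' (ENNReal.rpow_le_rpow hsob hqR0.le) (le_of_eq ?_)
          rw [← ENNReal.ofReal_rpow_of_pos hr, ← ENNReal.rpow_neg, ← ENNReal.rpow_mul]
  -- distribution function of H dominated by distFun of u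
  have hMle : ∀ τ : ℝ, 0 < τ →
      volume {x : EuclideanSpace ℝ (Fin n) | τ < H x} ≤
        distFun volume u (τ ^ (1/(θ-1))) := by
    intro τ hτ
    apply measure_mono
    intro x hx
    have h1 : τ ^ (1/(θ-1)) < (|u x| ^ (θ-1)) ^ (1/(θ-1)) :=
      Real.rpow_lt_rpow hτ.le hx (div_pos one_pos (by linarith))
    rwa [← Real.rpow_mul (abs_nonneg _), mul_one_div,
      div_self (by linarith : θ - 1 ≠ 0), Real.rpow_one] at h1
  -- combined pointwise bound
  set A : ℝ≥0∞ := W ^ (θ*(s-1)/s) with hA_def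
  set B : ℝ≥0∞ := ((CS : ℝ≥0∞) * G) ^ (qR*(s-1)/s) with hB_def
  have hMall : ∀ τ : ℝ, 0 < τ →
      (volume {x : EuclideanSpace ℝ (Fin n) | τ < H x}) ^ (1 - 1/s) ≤
        min (A * (ENNReal.ofReal τ) ^ (-α)) (B * (ENNReal.ofReal τ) ^ (-β)) := by
    intro τ hτ
    have hr : 0 < τ ^ (1/(θ-1)) := Real.rpow_pos_of_pos hτ _
    refine le_min ?_ ?_
    · refine le_trans (ENNReal.rpow_le_rpow ((hMle τ hτ).trans
        (wwe_distFun_le volume u hθ0 hr)) h1s) (le_of_eq ?_)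
      rw [← ENNReal.ofReal_rpow_of_pos hτ, ← ENNReal.rpow_mul (ENNReal.ofReal τ),
        ENNReal.mul_rpow_of_nonneg _ _ h1s, hA_def, ← ENNReal.rpow_mul W,
        ← ENNReal.rpow_mul (ENNReal.ofReal τ)]
      congr 1
      · congr 1
        field_simp
        try ring
        try exact Or.inl trivial
      · congr 1
        rw [hα_def]
        field_simp
        try ring
        try exact Or.inl trivial
    · refine le_trans (ENNReal.rpow_le_rpow ((hMle τ hτ).trans
        (hDu2 _ hr)) h1s) (le_of_eq ?_)
      rw [← ENNReal.ofReal_rpow_of_pos hτ, ← ENNReal.rpow_mul (ENNReal.ofReal τ),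
        ENNReal.mul_rpow_of_nonneg _ _ h1s, hB_def,
        ← ENNReal.rpow_mul ((CS : ℝ≥0∞) * G), ← ENNReal.rpow_mul (ENNReal.ofReal τ)]
      congr 1
      · congr 1
        rw [hqR_def]
        field_simp
        try ring
        try exact Or.inl trivial
      · congr 1
        rw [hβ_def, hqR_def]
        field_simp
        try ring
        try exact Or.inl trivial
  -- measurability facts
  have hDmeas : Measurable (fun t : ℝ => distFun volume f t) := by
    apply Antitone.measurable
    intro t t' htt'
    exact measure_mono (fun x hx => lt_of_le_of_lt htt' hx)
  have hMmeas : Measurable (fun τ : ℝ =>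
      volume {x : EuclideanSpace ℝ (Fin n) | τ < H x}) := by
    apply Antitone.measurable
    intro t t' htt'
    exact measure_mono (fun x hx => lt_of_le_of_lt htt' hx)
  -- layer cake
  have key : (∫⁻ x, ENNReal.ofReal (|f x| * H x)) ≤
      ∫⁻ τ in Ioi (0:ℝ), ∫⁻ t in Ioi (0:ℝ),
        min (distFun volume f t)
          (volume {x : EuclideanSpace ℝ (Fin n) | τ < H x}) := by
    have hHint : Measurable (fun x => ENNReal.ofReal (H x)) :=
      ENNReal.measurable_ofReal.comp hHc.measurable
    have hfabs : Measurable (fun x => ENNReal.ofReal (|f x|)) :=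
      ENNReal.measurable_ofReal.comp hf.abs
    set ν := volume.withDensity (fun x => ENNReal.ofReal (H x)) with hν_def
    have step1 : (∫⁻ x, ENNReal.ofReal (|f x| * H x)) =
        ∫⁻ t in Ioi (0:ℝ), ν {x | t < |f x|} := by
      rw [← lintegral_eq_lintegral_meas_lt ν (ae_of_all _ fun x => abs_nonneg (f x))
        (hf.abs.aemeasurable)]
      rw [hν_def, lintegral_withDensity_eq_lintegral_mul _ hHint hfabs]
      congr 1
      funext x
      simp only [Pi.mul_apply]
      rw [← ENNReal.ofReal_mul (hHnn x), mul_comm (H x)]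
    rw [step1]
    have step2 : ∀ t : ℝ, ν {x | t < |f x|} =
        ∫⁻ τ in Ioi (0:ℝ), (volume.restrict {x | t < |f x|})
          {x : EuclideanSpace ℝ (Fin n) | τ < H x} := by
      intro t
      have hmeas : MeasurableSet {x : EuclideanSpace ℝ (Fin n) | t < |f x|} :=
        measurableSet_lt measurable_const hf.abs
      rw [hν_def, withDensity_apply _ hmeas,
        ← lintegral_eq_lintegral_meas_lt (volume.restrict {x | t < |f x|})
          (ae_of_all _ hHnn) hHc.measurable.aemeasurable]
    calc ∫⁻ t in Ioi (0:ℝ), ν {x | t < |f x|}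
        ≤ ∫⁻ t in Ioi (0:ℝ), ∫⁻ τ in Ioi (0:ℝ),
            min (distFun volume f t)
              (volume {x : EuclideanSpace ℝ (Fin n) | τ < H x}) := by
          refine setLIntegral_mono' measurableSet_Ioi fun t _ => ?_
          rw [step2 t]
          refine setLIntegral_mono' measurableSet_Ioi fun τ _ => ?_
          rw [Measure.restrict_apply (measurableSet_lt measurable_const hHc.measurable)]
          exact le_min (measure_mono inter_subset_right) (measure_mono inter_subset_left)
      _ = ∫⁻ τ in Ioi (0:ℝ), ∫⁻ t in Ioi (0:ℝ),
            min (distFun volume f t)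
              (volume {x : EuclideanSpace ℝ (Fin n) | τ < H x}) := by
          apply lintegral_lintegral_swap
          exact ((hDmeas.comp measurable_fst).min (hMmeas.comp measurable_snd)).aemeasurable
  -- now estimate
  have hconst_ne : (ENNReal.ofReal (s/(s-1)) * K) ≠ ∞ :=
    ENNReal.mul_ne_top ENNReal.ofReal_ne_top hfK
  calc (∫⁻ x, ENNReal.ofReal (|f x| * H x))
      ≤ ∫⁻ τ in Ioi (0:ℝ), ∫⁻ t in Ioi (0:ℝ),
          min (distFun volume f t)
            (volume {x : EuclideanSpace ℝ (Fin n) | τ < H x}) := key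
    _ ≤ ∫⁻ τ in Ioi (0:ℝ), ENNReal.ofReal (s/(s-1)) * K *
          (volume {x : EuclideanSpace ℝ (Fin n) | τ < H x}) ^ (1 - 1/s) := by
        refine setLIntegral_mono' measurableSet_Ioi fun τ _ => ?_
        exact wwe_min_split hs1 _ K _ (fun t ht => wwe_distFun_le volume f hs0 ht)
    _ = ENNReal.ofReal (s/(s-1)) * K * ∫⁻ τ in Ioi (0:ℝ),
          (volume {x : EuclideanSpace ℝ (Fin n) | τ < H x}) ^ (1 - 1/s) := by
        rw [lintegral_const_mul' _ _ hconst_ne]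
    _ ≤ ENNReal.ofReal (s/(s-1)) * K * ∫⁻ τ in Ioi (0:ℝ),
          min (A * (ENNReal.ofReal τ) ^ (-α)) (B * (ENNReal.ofReal τ) ^ (-β)) := by
        exact mul_le_mul_right (setLIntegral_mono' measurableSet_Ioi
          fun τ hτ => hMall τ hτ) _
    _ ≤ ENNReal.ofReal (s/(s-1)) * K *
          (ENNReal.ofReal (1/(1-α) + 1/(β-1)) *
            (A ^ ((β-1)/(β-α)) * B ^ ((1-α)/(β-α)))) := by
        exact mul_le_mul_right (wwe_min_split2 hα0 hα1 hβ1 A B) _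
    _ ≤ ENNReal.ofReal ((s/(s-1)) * ((1/(1-α) + 1/(β-1)) * cS ^ e₂)) * K * W ^ e₁ * G ^ e₂ := by
        have hbane : β - α ≠ 0 := by linarith
        have hA' : A ^ ((β-1)/(β-α)) = W ^ e₁ := by
          rw [hA_def, ← ENNReal.rpow_mul]
          congr 1
          rw [mul_div_assoc', div_eq_iff hbane, he₁_def, hα_def, hβ_def]
          field_simp
          ring
        have hB' : B ^ ((1-α)/(β-α)) ≤ ENNReal.ofReal (cS ^ e₂) * G ^ e₂ := by
          rw [hB_def, ← ENNReal.rpow_mul]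
          have hexp : qR*(s-1)/s * ((1-α)/(β-α)) = e₂ := by
            rw [mul_div_assoc', div_eq_iff hbane, he₂_def, hα_def, hβ_def, hqR_def]
            field_simp
            ring
          rw [hexp, ENNReal.mul_rpow_of_nonneg _ _ he₂0.le,
            ← ENNReal.ofReal_rpow_of_pos hcS0]
          gcongr
          rw [← ENNReal.ofReal_coe_nnreal]
          exact ENNReal.ofReal_le_ofReal (by rw [hcS_def]; linarith)
        rw [hA']
        calc ENNReal.ofReal (s/(s-1)) * K *
              (ENNReal.ofReal (1/(1-α) + 1/(β-1)) * (W ^ e₁ * B ^ ((1-α)/(β-α))))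
            ≤ ENNReal.ofReal (s/(s-1)) * K *
              (ENNReal.ofReal (1/(1-α) + 1/(β-1)) *
                (W ^ e₁ * (ENNReal.ofReal (cS ^ e₂) * G ^ e₂))) := by
              exact mul_le_mul_right (mul_le_mul_right (mul_le_mul_right hB' _) _) _
          _ = ENNReal.ofReal ((s/(s-1)) * ((1/(1-α) + 1/(β-1)) * cS ^ e₂)) * K *
                W ^ e₁ * G ^ e₂ := by
              rw [ENNReal.ofReal_mul (div_nonneg hs0.le (by linarith)),
                ENNReal.ofReal_mul (add_nonneg (div_nonneg zero_le_one (by linarith))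
                  (div_nonneg zero_le_one (by linarith)))]
              ring
end

section
/- (Gagliardo–Nirenberg type inequality.) Let n ≥ 3 and let θ ≥ n - 2 with θ > 2. Then there is a constant C > 0, depending only on n and θ, such that for every u ∈ C_c^∞(ℝⁿ), ‖u‖_{L^{θ+2}(ℝⁿ)}^{(θ+2)/2} ≤ C ‖u‖_{L^{θ}(ℝⁿ)}^{(θ-n+2)/2} ‖∇(|u|^{θ/2})‖_{L²(ℝⁿ)}^{n/θ}. -/
open MeasureTheory ENNReal Set
open Module InnerProductSpace
open scoped NNReal

/-- Gagliardo–Nirenberg type inequality: for `n ≥ 3`, `θ ≥ n-2`, `θ > 2` and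
`u ∈ C_c^∞(ℝⁿ)`:
`‖u‖_{L^{θ+2}}^{(θ+2)/2} ≤ C ‖u‖_{L^θ}^{(θ-n+2)/2} ‖∇(|u|^{θ/2})‖_{L²}^{n/θ}`. -/
theorem gagliardo_nirenberg_type
    (n : ℕ) (hn : 3 ≤ n) (θ : ℝ) (hθ1 : (n:ℝ) - 2 ≤ θ) (hθ2 : 2 < θ) :
    ∃ C : ℝ, 0 < C ∧ ∀ u : EuclideanSpace ℝ (Fin n) → ℝ,
      ContDiff ℝ (⊤ : ℕ∞) u → HasCompactSupport u →
      eLpNorm u (ENNReal.ofReal (θ + 2)) volume ^ ((θ + 2)/2)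
        ≤ ENNReal.ofReal C
          * eLpNorm u (ENNReal.ofReal θ) volume ^ ((θ - (n:ℝ) + 2)/2)
          * eLpNorm (fun x => ‖gradient (fun y => |u y| ^ (θ/2)) x‖) 2 volume
              ^ ((n:ℝ)/θ) := by
  have hn3 : (3:ℝ) ≤ (n:ℝ) := by exact_mod_cast hn
  have hn2 : (0:ℝ) < (n:ℝ) - 2 := by linarith
  have hθ0 : (0:ℝ) < θ := by linarith
  set E := EuclideanSpace ℝ (Fin n) with hE
  have hrank : finrank ℝ E = n := finrank_euclideanSpace_fin
  set p' : ℝ≥0 := ⟨2*n/((n:ℝ)-2), by positivity⟩ with hp'def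
  have hp'coe : (p' : ℝ) = 2*n/((n:ℝ)-2) := rfl
  have hp' : (p' : ℝ)⁻¹ = ((2:ℝ≥0):ℝ)⁻¹ - (finrank ℝ E : ℝ)⁻¹ := by
    rw [hrank, hp'coe]
    push_cast
    field_simp
  set C₀ : ℝ≥0 := eLpNormLESNormFDerivOfEqInnerConst (volume : Measure E) 2 with hC₀
  refine ⟨(C₀:ℝ) ^ ((n:ℝ)/θ) + 1, by positivity, ?_⟩
  intro u hu h2u
  have hu1 : ContDiff ℝ 1 u := hu.of_le (by simp)
  have hhalf : (1:ℝ) < θ/2 := by linarith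
  have habs : (fun y => |u y| ^ (θ/2)) = fun y => ‖u y‖ ^ (θ/2) := by
    funext y; rw [Real.norm_eq_abs]
  rw [habs]
  set v : E → ℝ := fun y => ‖u y‖ ^ (θ/2) with hv
  have hv1 : ContDiff ℝ 1 v := hu1.norm_rpow hhalf
  have hv2 : HasCompactSupport v := by
    have hvc : v = (fun t : ℝ => ‖t‖ ^ (θ/2)) ∘ u := rfl
    rw [hvc]
    exact h2u.comp_left (by simp [Real.zero_rpow (show θ/2 ≠ 0 by positivity)])
  have hSob : eLpNorm v p' volume ≤ C₀ * eLpNorm (fderiv ℝ v) 2 volume := by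
    have h := eLpNorm_le_eLpNorm_fderiv_of_eq_inner (volume : Measure E) hv1 hv2
      (p := 2) (p' := p') one_le_two (by rw [hrank]; omega) hp'
    simpa using h
  have hgrad : eLpNorm (fun x => ‖gradient v x‖) 2 volume
      = eLpNorm (fderiv ℝ v) 2 volume := by
    apply eLpNorm_congr_norm_ae
    filter_upwards with x
    rw [norm_norm]
    exact (toDual ℝ E).symm.norm_map (fderiv ℝ v x)
  set N : ℝ → ℝ≥0∞ := fun a => ∫⁻ x, (‖u x‖₊ : ℝ≥0∞) ^ a ∂(volume : Measure E) with hN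
  have hNm : ∀ a : ℝ, AEMeasurable (fun x => (‖u x‖₊ : ℝ≥0∞) ^ a) (volume : Measure E) := by
    intro a
    exact (hu1.continuous.nnnorm.measurable.coe_nnreal_ennreal.pow_const a).aemeasurable
  have h1 : ∀ a : ℝ, 0 < a → eLpNorm u (ENNReal.ofReal a) volume = N a ^ (1/a) := by
    intro a ha
    rw [eLpNorm_eq_lintegral_rpow_enorm_toReal
      (fun h => absurd (ENNReal.ofReal_eq_zero.mp h) (by linarith)) ENNReal.ofReal_ne_top,
      ENNReal.toReal_ofReal ha.le]
    rfl
  set Q : ℝ := θ*n/((n:ℝ)-2) with hQdef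
  have hQpos : 0 < Q := by positivity
  have h2 : eLpNorm v (p' : ℝ≥0∞) volume = N Q ^ (((n:ℝ)-2)/(2*n)) := by
    rw [hv, eLpNorm_norm_rpow u (by positivity : (0:ℝ) < θ/2)]
    have hmul : (p' : ℝ≥0∞) * ENNReal.ofReal (θ/2) = ENNReal.ofReal Q := by
      rw [← ENNReal.ofReal_coe_nnreal, ← ENNReal.ofReal_mul (by positivity), hp'coe]
      congr 1
      rw [hQdef]; field_simp
    rw [hmul, h1 Q hQpos, ← ENNReal.rpow_mul]
    congr 1
    rw [hQdef]; field_simp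
  -- interpolation
  have h3 : N (θ+2) ^ ((1:ℝ)/2)
      ≤ N θ ^ ((θ-(n:ℝ)+2)/(2*θ)) * N Q ^ (((n:ℝ)-2)/(2*θ)) := by
    rcases eq_or_lt_of_le hθ1 with heq | hlt
    · have hQn : Q = (n:ℝ) := by rw [hQdef, ← heq]; field_simp
      have hθn : θ + 2 = (n:ℝ) := by linarith
      have he0 : (θ-(n:ℝ)+2)/(2*θ) = 0 := by
        rw [show θ-(n:ℝ)+2 = 0 by linarith, zero_div]
      have he1 : ((n:ℝ)-2)/(2*θ) = 1/2 := by rw [← heq]; field_simp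
      rw [hQn, hθn, he0, he1, ENNReal.rpow_zero, one_mul]
    · have ha : (0:ℝ) < θ + 2 - n := by linarith
      have hconj : Real.HolderConjugate (θ/(θ+2-(n:ℝ))) (θ/((n:ℝ)-2)) := by
        rw [Real.holderConjugate_iff]; constructor
        · rw [lt_div_iff₀ ha]; linarith
        · rw [inv_div, inv_div]; field_simp; ring
      have hH := ENNReal.lintegral_mul_le_Lp_mul_Lq (volume : Measure E) hconj
        (hNm (θ+2-(n:ℝ))) (hNm (n:ℝ))
      have hkey : N (θ+2) ≤ N θ ^ ((θ+2-(n:ℝ))/θ) * N Q ^ (((n:ℝ)-2)/θ) := by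
        calc N (θ+2)
            = ∫⁻ x, ((fun x => (‖u x‖₊:ℝ≥0∞) ^ (θ+2-(n:ℝ)))
                * fun x => (‖u x‖₊:ℝ≥0∞) ^ (n:ℝ)) x ∂(volume : Measure E) := by
              apply lintegral_congr; intro x
              simp only [Pi.mul_apply]
              rw [← ENNReal.rpow_add_of_nonneg _ _ ha.le (by positivity)]
              congr 1; ring
          _ ≤ (∫⁻ x, ((‖u x‖₊:ℝ≥0∞) ^ (θ+2-(n:ℝ))) ^ (θ/(θ+2-(n:ℝ)))
                ∂(volume : Measure E)) ^ (1/(θ/(θ+2-(n:ℝ))))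
              * (∫⁻ x, ((‖u x‖₊:ℝ≥0∞) ^ (n:ℝ)) ^ (θ/((n:ℝ)-2))
                ∂(volume : Measure E)) ^ (1/(θ/((n:ℝ)-2))) := hH
          _ = N θ ^ ((θ+2-(n:ℝ))/θ) * N Q ^ (((n:ℝ)-2)/θ) := by
              rw [one_div_div, one_div_div]
              congr 1
              · congr 1
                apply lintegral_congr; intro x
                rw [← ENNReal.rpow_mul]
                congr 1; field_simp
              · congr 1
                apply lintegral_congr; intro x
                rw [← ENNReal.rpow_mul]
                congr 1; rw [hQdef]; field_simp
      have h12 := ENNReal.rpow_le_rpow hkey (by norm_num : (0:ℝ) ≤ 1/2)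
      rwa [ENNReal.mul_rpow_of_nonneg _ _ (by norm_num), ← ENNReal.rpow_mul,
        ← ENNReal.rpow_mul,
        show (θ+2-(n:ℝ))/θ * (1/2) = (θ-(n:ℝ)+2)/(2*θ) by ring,
        show ((n:ℝ)-2)/θ * (1/2) = ((n:ℝ)-2)/(2*θ) by ring] at h12
  -- assemble
  have hgoal1 : eLpNorm u (ENNReal.ofReal (θ+2)) volume ^ ((θ+2)/2)
      = N (θ+2) ^ ((1:ℝ)/2) := by
    rw [h1 (θ+2) (by linarith), ← ENNReal.rpow_mul]
    congr 1; field_simp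
  have hgoal2 : eLpNorm u (ENNReal.ofReal θ) volume ^ ((θ - (n:ℝ) + 2)/2)
      = N θ ^ ((θ - (n:ℝ) + 2)/(2*θ)) := by
    rw [h1 θ hθ0, ← ENNReal.rpow_mul]
    congr 1; ring
  rw [hgoal1, hgoal2, hgrad]
  set D := eLpNorm (fderiv ℝ v) 2 volume with hD
  calc N (θ+2) ^ ((1:ℝ)/2)
      ≤ N θ ^ ((θ - (n:ℝ) + 2)/(2*θ)) * N Q ^ (((n:ℝ)-2)/(2*θ)) := h3
    _ = N θ ^ ((θ - (n:ℝ) + 2)/(2*θ)) * (N Q ^ (((n:ℝ)-2)/(2*n))) ^ ((n:ℝ)/θ) := by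
        rw [← ENNReal.rpow_mul]
        congr 2
        field_simp
    _ ≤ N θ ^ ((θ - (n:ℝ) + 2)/(2*θ)) * ((C₀ : ℝ≥0∞) * D) ^ ((n:ℝ)/θ) := by
        gcongr
        rw [← h2]
        exact hSob
    _ = (C₀ : ℝ≥0∞) ^ ((n:ℝ)/θ) * N θ ^ ((θ - (n:ℝ) + 2)/(2*θ)) * D ^ ((n:ℝ)/θ) := by
        rw [ENNReal.mul_rpow_of_nonneg _ _ (by positivity)]
        ring
    _ ≤ ENNReal.ofReal ((C₀:ℝ) ^ ((n:ℝ)/θ) + 1)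
          * N θ ^ ((θ - (n:ℝ) + 2)/(2*θ)) * D ^ ((n:ℝ)/θ) := by
        gcongr
        rw [← ENNReal.ofReal_coe_nnreal, ENNReal.ofReal_rpow_of_nonneg C₀.coe_nonneg
          (by positivity)]
        exact ENNReal.ofReal_le_ofReal (by linarith)
end
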